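/- arXiv:1709.03380 — 12 statements merged into one kernel-verified Lean document; each statement's English description precedes it below -/
import Mathlib

section
/- Let n ≥ 1 be an integer, let q be a real number with q > 0 and q ≠ 1, and let A_0, ..., A_n be complex numbers such that the homogeneous polynomial W(x,y) = Σ_{i=0}^{n} A_i x^{n-i} y^i satisfies W((x+(q-1)y)/√q, (x-y)/√q) = -W(x,y) identically. Then for every ν = 0, 1, ..., n one has Σ_{i=0}^{n-ν} binom(n-i, ν) A_i = -q^{n/2-ν} Σ_{i=0}^{ν} binom(n-i, n-ν) A_i. -/
open Polynomial Finset

/-- Theorem 2.1 (Binomial moments): if the homogeneous polynomial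
`W(x,y) = ∑_{i=0}^n A_i x^{n-i} y^i` satisfies `W^{σ_q}(x,y) = -W(x,y)`,
then its binomial moments satisfy
`∑_{i=0}^{n-ν} C(n-i,ν) A_i = -q^{n/2-ν} ∑_{i=0}^{ν} C(n-i,n-ν) A_i`
for `ν = 0, 1, …, n`.  (Here `q^{n/2-ν}` is written as `(√q)^{n-2ν}`.) -/
theorem binomial_moments_fwe (n : ℕ) (hn : 1 ≤ n) (q : ℝ) (hq0 : 0 < q) (hq1 : q ≠ 1)
    (A : ℕ → ℂ)
    (hW : ∀ x y : ℂ,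
      (∑ i ∈ Finset.range (n + 1),
        A i * ((x + ((q : ℂ) - 1) * y) / (Real.sqrt q : ℂ)) ^ (n - i) *
          ((x - y) / (Real.sqrt q : ℂ)) ^ i)
        = -∑ i ∈ Finset.range (n + 1), A i * x ^ (n - i) * y ^ i) :
    ∀ ν : ℕ, ν ≤ n →
      ∑ i ∈ Finset.range (n - ν + 1), ((n - i).choose ν : ℂ) * A i
        = -((Real.sqrt q : ℂ)) ^ ((n : ℤ) - 2 * (ν : ℤ)) *
            ∑ i ∈ Finset.range (ν + 1), ((n - i).choose (n - ν) : ℂ) * A i := by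
  intro ν hν
  set s : ℂ := (Real.sqrt q : ℂ) with hs
  have hs0 : s ≠ 0 := by
    simp [hs, Complex.ofReal_ne_zero, (Real.sqrt_pos.mpr hq0).ne']
  have hs2 : s ^ 2 = (q : ℂ) := by
    rw [hs]; norm_cast; exact Real.sq_sqrt hq0.le
  set P : ℂ[X] := ∑ i ∈ range (n+1), C (A i * s⁻¹ ^ n) * ((X + C (q:ℂ)) ^ (n - i) * X ^ i)
    with hP
  set Q : ℂ[X] := -∑ i ∈ range (n+1), C (A i) * (X + 1) ^ (n - i) with hQ
  have hPQ : P = Q := by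
    apply Polynomial.funext
    intro x
    have h := hW (x + 1) 1
    have h1 : x + 1 + ((q:ℂ) - 1) * 1 = x + q := by ring
    have h2 : x + 1 - (1:ℂ) = x := by ring
    rw [h1, h2] at h
    simp only [one_pow, mul_one] at h
    simp only [hP, hQ, eval_neg, eval_finset_sum, eval_mul, eval_pow, eval_add, eval_C,
      eval_X, eval_one]
    rw [← h]
    refine Finset.sum_congr rfl fun i hi => ?_
    have hin : i ≤ n := Finset.mem_range_succ_iff.mp hi
    have hpow : s ^ (n - i) * s ^ i = s ^ n := by rw [← pow_add, Nat.sub_add_cancel hin]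
    rw [div_pow, div_pow, inv_pow]
    field_simp
    rw [← hpow]
    ring
  have hc : P.coeff ν = Q.coeff ν := by rw [hPQ]
  have hQc : Q.coeff ν = -∑ i ∈ range (n - ν + 1), ((n - i).choose ν : ℂ) * A i := by
    rw [hQ]
    simp only [coeff_neg, finset_sum_coeff, coeff_C_mul, coeff_X_add_one_pow]
    congr 1
    have hz : ∀ i ∈ range (n + 1), i ∉ range (n - ν + 1) →
        A i * ((n - i).choose ν : ℂ) = 0 := by
      intro i hi hni
      simp only [Finset.mem_range] at hi hni
      rw [Nat.choose_eq_zero_of_lt (by omega)]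
      simp
    rw [← Finset.sum_subset (Finset.range_subset_range.mpr (by omega : n - ν + 1 ≤ n + 1)) hz]
    exact Finset.sum_congr rfl fun i _ => mul_comm _ _
  have hPc : P.coeff ν
      = s⁻¹ ^ n * (q:ℂ) ^ (n - ν) * ∑ i ∈ range (ν + 1), ((n - i).choose (n - ν) : ℂ) * A i := by
    rw [hP]
    simp only [finset_sum_coeff, coeff_C_mul, coeff_mul_X_pow', coeff_X_add_C_pow]
    rw [Finset.mul_sum]
    have hz : ∀ i ∈ range (n + 1), i ∉ range (ν + 1) →
        A i * s⁻¹ ^ n * (if i ≤ ν then (q:ℂ) ^ (n - i - (ν - i)) * ((n - i).choose (ν - i) : ℂ)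
          else 0) = 0 := by
      intro i hi hni
      simp only [Finset.mem_range] at hi hni
      rw [if_neg (by omega)]
      simp
    rw [← Finset.sum_subset (Finset.range_subset_range.mpr (by omega : ν + 1 ≤ n + 1)) hz]
    · refine Finset.sum_congr rfl fun i hi => ?_
      have hiν : i ≤ ν := Finset.mem_range_succ_iff.mp hi
      rw [if_pos hiν]
      have e1 : n - i - (ν - i) = n - ν := by omega
      have e2 : (n - i).choose (ν - i) = (n - i).choose (n - ν) := by
        rw [← Nat.choose_symm (by omega : n - ν ≤ n - i)]
        congr 1
        omega
      rw [e1, e2]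
      ring
  have key : s ^ ((n:ℤ) - 2 * (ν:ℤ)) = s⁻¹ ^ n * (q:ℂ) ^ (n - ν) := by
    rw [← hs2, ← pow_mul, inv_pow, ← zpow_natCast s n, ← zpow_natCast s (2 * (n - ν)),
      ← zpow_neg, ← zpow_add₀ hs0]
    congr 1
    omega
  rw [hQc, hPc] at hc
  rw [key]
  linear_combination hc
end

section
/- Let n ≥ 1 be an integer, let q be a real number with q > 0 and q ≠ 1, and let A_0, ..., A_n be complex numbers such that the polynomial W(x,y) = Σ_{i=0}^{n} A_i x^{2(n-i)} y^{2i} satisfies W((x+(q-1)y)/√q, (x-y)/√q) = -W(x,y) identically. Then for every ν = 0, 1, ..., 2n one has Σ_{i=0}^{n-⌊(ν+1)/2⌋} binom(2n-2i, ν) A_i = -q^{n-ν} Σ_{i=0}^{⌊ν/2⌋} binom(2n-2i, 2n-ν) A_i, where ⌊x⌋ is the greatest integer not exceeding x. -/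
open Polynomial Finset


/-- Corollary 2.2: binomial moment identities for an even-degree formal weight
enumerator `W(x,y) = ∑_{i=0}^n A_i x^{2(n-i)} y^{2i}` divisible by two, with
`W^{σ_q}(x,y) = -W(x,y)`:
`∑_{i=0}^{n-⌊(ν+1)/2⌋} C(2n-2i,ν) A_i = -q^{n-ν} ∑_{i=0}^{⌊ν/2⌋} C(2n-2i,2n-ν) A_i`
for `ν = 0, 1, …, 2n`. -/
theorem binomial_moments_even_deg (n : ℕ) (hn : 1 ≤ n) (q : ℝ) (hq0 : 0 < q) (hq1 : q ≠ 1)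
    (A : ℕ → ℂ)
    (hW : ∀ x y : ℂ,
      (∑ i ∈ Finset.range (n + 1),
        A i * ((x + ((q : ℂ) - 1) * y) / (Real.sqrt q : ℂ)) ^ (2 * (n - i)) *
          ((x - y) / (Real.sqrt q : ℂ)) ^ (2 * i))
        = -∑ i ∈ Finset.range (n + 1), A i * x ^ (2 * (n - i)) * y ^ (2 * i)) :
    ∀ ν : ℕ, ν ≤ 2 * n →
      ∑ i ∈ Finset.range (n - (ν + 1) / 2 + 1), ((2 * n - 2 * i).choose ν : ℂ) * A i
        = -((q : ℂ)) ^ ((n : ℤ) - (ν : ℤ)) *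
            ∑ i ∈ Finset.range (ν / 2 + 1), ((2 * n - 2 * i).choose (2 * n - ν) : ℂ) * A i := by
  intro ν hν
  set qc : ℂ := (q : ℂ) with hqc
  have hs2 : ((Real.sqrt q : ℂ))^2 = qc := by
    rw [← Complex.ofReal_pow, Real.sq_sqrt hq0.le]
  have hqne : qc ≠ 0 := by
    simp [hqc, hq0.ne']
  have hsne : ((Real.sqrt q : ℂ)) ≠ 0 := by
    intro h; rw [h] at hs2; simp at hs2; exact hqne hs2.symm
  set P : Polynomial ℂ := ∑ i ∈ range (n+1), C (A i) * (X + C qc)^(2*(n-i)) * X^(2*i) with hP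
  set Q : Polynomial ℂ := ∑ i ∈ range (n+1), C (A i) * (X + 1)^(2*(n-i)) with hQ
  have key : P = C (-(qc^n)) * Q := by
    apply Polynomial.funext
    intro x
    have h1 := hW (x + 1) 1
    simp only [mul_one, add_sub_cancel_right, one_pow] at h1
    have h2 : ∀ i ∈ range (n+1),
        A i * ((x + 1 + (qc - 1)) / (Real.sqrt q : ℂ)) ^ (2 * (n - i)) *
          (x / (Real.sqrt q : ℂ)) ^ (2 * i)
        = (qc^n)⁻¹ * (A i * (x + qc)^(2*(n-i)) * x^(2*i)) := by
      intro i hi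
      have hin : i ≤ n := by simpa using Nat.lt_succ_iff.mp (mem_range.mp hi)
      have hx : x + 1 + (qc - 1) = x + qc := by ring
      rw [hx]
      have hpow : ((Real.sqrt q : ℂ))^(2*(n-i)) * ((Real.sqrt q : ℂ))^(2*i) = qc^n := by
        rw [← pow_add]
        have : 2*(n-i) + 2*i = 2*n := by omega
        rw [this, pow_mul, hs2]
      rw [div_pow, div_pow, ← hpow]
      have h1 : ((Real.sqrt q : ℂ))^(2*(n-i)) ≠ 0 := pow_ne_zero _ hsne
      have h2 : ((Real.sqrt q : ℂ))^(2*i) ≠ 0 := pow_ne_zero _ hsne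
      field_simp
    rw [Finset.sum_congr rfl h2, ← Finset.mul_sum] at h1
    have hqn : (qc^n) ≠ 0 := pow_ne_zero _ hqne
    simp only [eval_mul, eval_C, eval_finset_sum, eval_pow, eval_add, eval_X, eval_one, hP, hQ]
    field_simp at h1 ⊢
    rw [h1]
  -- compute coefficients
  have hcoP : ∀ i ∈ range (n+1),
      (C (A i) * (X + C qc)^(2*(n-i)) * X^(2*i)).coeff ν
      = if 2*i ≤ ν then A i * (qc^(2*n-ν) * ((2*n-2*i).choose (ν - 2*i))) else 0 := by
    intro i hi
    have hin : i ≤ n := by simpa using Nat.lt_succ_iff.mp (mem_range.mp hi)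
    rw [mul_assoc, coeff_C_mul, coeff_mul_X_pow', coeff_X_add_C_pow]
    split_ifs with h
    · have e1 : 2*(n-i) - (ν - 2*i) = 2*n - ν := by omega
      have e2 : 2*(n-i) = 2*n - 2*i := by omega
      rw [e1, e2]
    · rw [mul_zero]
  have hcoQ : ∀ i ∈ range (n+1),
      (C (A i) * (X + 1)^(2*(n-i))).coeff ν = A i * ((2*n-2*i).choose ν) := by
    intro i hi
    have hin : i ≤ n := by simpa using Nat.lt_succ_iff.mp (mem_range.mp hi)
    have e2 : 2*(n-i) = 2*n - 2*i := by omega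
    rw [coeff_C_mul, coeff_X_add_one_pow, e2]
  have hcoP' : (∑ i ∈ range (n+1), (C (A i) * (X + C qc)^(2*(n-i)) * X^(2*i)).coeff ν)
      = qc^(2*n-ν) * ∑ i ∈ range (ν/2+1), ((2*n-2*i).choose (2*n-ν) : ℂ) * A i := by
    rw [Finset.sum_congr rfl hcoP, Finset.mul_sum]
    rw [← Finset.sum_subset (Finset.range_subset_range.mpr (by omega : ν/2+1 ≤ n+1))]
    · apply Finset.sum_congr rfl
      intro i hi
      have hiv : i ≤ ν/2 := by simpa using Nat.lt_succ_iff.mp (mem_range.mp hi)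
      have h2i : 2*i ≤ ν := by omega
      rw [if_pos h2i]
      have : (2*n-2*i).choose (ν - 2*i) = (2*n-2*i).choose (2*n-ν) := by
        rw [← Nat.choose_symm (by omega : ν - 2*i ≤ 2*n-2*i)]
        congr 1
        omega
      rw [this]; ring
    · intro i hi hni
      have : ¬ (2*i ≤ ν) := by
        simp only [mem_range] at hi hni
        omega
      rw [if_neg this]
  have hcoQ' : (∑ i ∈ range (n+1), (C (A i) * (X + 1)^(2*(n-i))).coeff ν)
      = ∑ i ∈ range (n - (ν+1)/2 + 1), ((2*n-2*i).choose ν : ℂ) * A i := by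
    rw [Finset.sum_congr rfl hcoQ]
    rw [← Finset.sum_subset (Finset.range_subset_range.mpr (by omega : n - (ν+1)/2 + 1 ≤ n+1))]
    · exact Finset.sum_congr rfl (fun i _ => mul_comm _ _)
    · intro i hi hni
      have : (2*n-2*i).choose ν = 0 := by
        apply Nat.choose_eq_zero_of_lt
        simp only [mem_range] at hi hni
        omega
      rw [this]
      simp
  have hcoC : ((C (-(qc^n)) * Q).coeff ν) = -(qc^n) * Q.coeff ν := by
    rw [coeff_C_mul]
  have hco2 : P.coeff ν = (C (-(qc^n)) * Q).coeff ν := by rw [key]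
  rw [hcoC] at hco2
  rw [hP, hQ, finset_sum_coeff, finset_sum_coeff, hcoP', hcoQ'] at hco2
  -- hco2 : qc^(2n-ν) * S₂ = -(qc^n) * S₁
  have hzpow : qc ^ ((n:ℤ) - (ν:ℤ)) = qc^(2*n-ν : ℕ) * (qc^n)⁻¹ := by
    rw [← zpow_natCast qc (2*n-ν), ← zpow_natCast qc n, ← zpow_neg, ← zpow_add₀ hqne]
    congr 1
    have : ((2*n-ν : ℕ) : ℤ) = 2*(n:ℤ) - ν := by omega
    rw [this]
    ring
  rw [hzpow]
  have hqn : (qc^n) ≠ 0 := pow_ne_zero _ hqne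
  field_simp
  linear_combination hco2
end

section
/- Let n ≥ 1 be an integer, let q be a real number with q > 0 and q ≠ 1, and let A_0, ..., A_n be complex numbers such that the polynomial W(x,y) = Σ_{i=0}^{n} A_i x^{2(n-i)+1} y^{2i} satisfies W((x+(q-1)y)/√q, (x-y)/√q) = -W(x,y) identically. Then for every ν = 0, 1, ..., 2n+1 one has Σ_{i=0}^{⌊(2n+1-ν)/2⌋} binom(2n+1-2i, ν) A_i = -q^{n-ν+1/2} Σ_{i=0}^{⌊ν/2⌋} binom(2n+1-2i, 2n+1-ν) A_i, where ⌊x⌋ is the greatest integer not exceeding x. -/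
/-!
Write `r = √q`. Substituting `x = r + t / r`, `y = t / r` turns the transformed variables into
`1 + t` and `1`, so `W^{σ_q} = ε W` for `W = ∑ A i x^{a i} y^{b i}` of degree `d` becomes the
polynomial identity `r^d ∑ A i (1 + t)^{a i} = ε ∑ A i (q + t)^{a i} t^{b i}`. Comparing the
coefficients of `t^ν` gives the binomial moments, with `C(a i, ν - b i) = C(a i, d - ν)`.
-/

open Polynomial Finset

section MacWilliams

variable {K ι : Type*} [Field K] {s : Finset ι} {A : ι → K} {a b : ι → ℕ} {d : ℕ} {r ε : K}

/-- `W(x, y) = ∑ i ∈ s, A i * x ^ a i * y ^ b i` satisfies `W^{σ_q} = ε W` for `q = r ^ 2`. -/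
def IsMacWilliamsEigenvector (s : Finset ι) (A : ι → K) (a b : ι → ℕ) (r ε : K) : Prop :=
  ∀ x y : K, ∑ i ∈ s, A i * ((x + (r ^ 2 - 1) * y) / r) ^ a i * ((x - y) / r) ^ b i
    = ε * ∑ i ∈ s, A i * x ^ a i * y ^ b i

theorem IsMacWilliamsEigenvector.pow_mul_sum_one_add_pow (hW : IsMacWilliamsEigenvector s A a b r ε)
    (hab : ∀ i ∈ s, a i + b i = d) (hr : r ≠ 0) (t : K) :
    r ^ d * ∑ i ∈ s, A i * (1 + t) ^ a i = ε * ∑ i ∈ s, A i * (r ^ 2 + t) ^ a i * t ^ b i := by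
  have hx : (r + t / r + (r ^ 2 - 1) * (t / r)) / r = 1 + t := by field_simp; ring
  have hy : (r + t / r - t / r) / r = 1 := by field_simp; ring
  have h := hW (r + t / r) (t / r)
  rw [hx, hy, show r + t / r = (r ^ 2 + t) / r by field_simp] at h
  simp only [one_pow, mul_one] at h
  rw [h, mul_left_comm]
  congr 1
  rw [Finset.mul_sum]
  refine Finset.sum_congr rfl fun i hi => ?_
  rw [← hab i hi, div_pow, div_pow, pow_add]
  field_simp

theorem IsMacWilliamsEigenvector.pow_mul_sum_choose_mul [Infinite K]
    (hW : IsMacWilliamsEigenvector s A a b r ε) (hab : ∀ i ∈ s, a i + b i = d) (hr : r ≠ 0)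
    {ν : ℕ} (hν : ν ≤ d) :
    r ^ d * ∑ i ∈ s, ((a i).choose ν : K) * A i
      = ε * r ^ (2 * (d - ν)) * ∑ i ∈ s with b i ≤ ν, ((a i).choose (d - ν) : K) * A i := by
  have hpoly : C (r ^ d) * ∑ i ∈ s, C (A i) * (X + 1) ^ a i
      = C ε * ∑ i ∈ s, C (A i) * (X + C (r ^ 2)) ^ a i * X ^ b i := by
    refine Polynomial.funext fun t => ?_
    simpa [eval_finsetSum, add_comm t] using hW.pow_mul_sum_one_add_pow hab hr t
  have h := congrArg (coeff · ν) hpoly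
  simp only [coeff_C_mul, finsetSum_coeff, coeff_mul_X_pow', coeff_X_add_one_pow,
    coeff_X_add_C_pow] at h
  calc r ^ d * ∑ i ∈ s, ((a i).choose ν : K) * A i
      = ε * ∑ i ∈ s,
          if b i ≤ ν then A i * ((r ^ 2) ^ (a i - (ν - b i)) * ((a i).choose (ν - b i) : K))
          else 0 := by simp_rw [← h, mul_comm]
    _ = ε * r ^ (2 * (d - ν)) * ∑ i ∈ s with b i ≤ ν, ((a i).choose (d - ν) : K) * A i := by
      rw [Finset.sum_filter, mul_assoc]
      congr 1
      rw [Finset.mul_sum]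
      refine Finset.sum_congr rfl fun i hi => ?_
      split_ifs with hbi
      · have hai := hab i hi
        rw [← pow_mul, show a i - (ν - b i) = d - ν by omega,
          Nat.choose_symm_of_eq_add (show a i = (ν - b i) + (d - ν) by omega)]
        ring
      · rw [mul_zero]

theorem IsMacWilliamsEigenvector.sum_choose_mul [Infinite K]
    (hW : IsMacWilliamsEigenvector s A a b r ε) (hab : ∀ i ∈ s, a i + b i = d) (hr : r ≠ 0)
    {ν : ℕ} (hν : ν ≤ d) :
    ∑ i ∈ s, ((a i).choose ν : K) * A i
      = ε * r ^ ((d : ℤ) - 2 * ν) * ∑ i ∈ s with b i ≤ ν, ((a i).choose (d - ν) : K) * A i := by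
  have hrd : r ^ d ≠ 0 := pow_ne_zero d hr
  rw [← mul_right_inj' hrd, hW.pow_mul_sum_choose_mul hab hr hν]
  have hpow : r ^ d * r ^ ((d : ℤ) - 2 * ν) = r ^ (2 * (d - ν)) := by
    rw [← zpow_natCast, ← zpow_natCast, ← zpow_add₀ hr]
    congr 1
    omega
  rw [← hpow]
  ring

end MacWilliams

theorem binomial_moments_odd_deg_general (n : ℕ) (q : ℝ) (hq0 : 0 < q)
    (A : ℕ → ℂ)
    (hW : ∀ x y : ℂ,
      (∑ i ∈ Finset.range (n + 1),
        A i * ((x + ((q : ℂ) - 1) * y) / (Real.sqrt q : ℂ)) ^ (2 * (n - i) + 1) *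
          ((x - y) / (Real.sqrt q : ℂ)) ^ (2 * i))
        = -∑ i ∈ Finset.range (n + 1), A i * x ^ (2 * (n - i) + 1) * y ^ (2 * i)) :
    ∀ ν : ℕ, ν ≤ 2 * n + 1 →
      ∑ i ∈ Finset.range ((2 * n + 1 - ν) / 2 + 1), ((2 * n + 1 - 2 * i).choose ν : ℂ) * A i
        = -((Real.sqrt q : ℂ)) ^ (2 * (n : ℤ) - 2 * (ν : ℤ) + 1) *
            ∑ i ∈ Finset.range (ν / 2 + 1),
              ((2 * n + 1 - 2 * i).choose (2 * n + 1 - ν) : ℂ) * A i := by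
  intro ν hν
  have hr : (Real.sqrt q : ℂ) ≠ 0 := by exact_mod_cast (Real.sqrt_pos.mpr hq0).ne'
  have hq : (q : ℂ) = (Real.sqrt q : ℂ) ^ 2 := by exact_mod_cast (Real.sq_sqrt hq0.le).symm
  have hW' : IsMacWilliamsEigenvector (range (n + 1)) A (fun i => 2 * (n - i) + 1) (fun i => 2 * i)
      (Real.sqrt q : ℂ) (-1) := by
    intro x y
    rw [← hq, hW, neg_one_mul]
  have hodd : ∀ i ∈ range (n + 1), 2 * (n - i) + 1 = 2 * n + 1 - 2 * i := fun i hi => by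
    have := mem_range.mp hi; omega
  have hab : ∀ i ∈ range (n + 1), 2 * (n - i) + 1 + 2 * i = 2 * n + 1 := fun i hi => by
    have := mem_range.mp hi; omega
  have h := hW'.sum_choose_mul hab hr hν
  have hL : ∑ i ∈ range ((2 * n + 1 - ν) / 2 + 1), ((2 * n + 1 - 2 * i).choose ν : ℂ) * A i
      = ∑ i ∈ range (n + 1), ((2 * (n - i) + 1).choose ν : ℂ) * A i := by
    refine Finset.sum_subset_zero_on_sdiff (range_subset_range.mpr (by omega)) ?_ ?_
    · intro i hi
      simp only [mem_sdiff, mem_range] at hi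
      rw [Nat.choose_eq_zero_of_lt (by omega), Nat.cast_zero, zero_mul]
    · intro i hi
      rw [hodd i (range_subset_range.mpr (by omega) hi)]
  have hR : (range (n + 1)).filter (fun i => 2 * i ≤ ν) = range (ν / 2 + 1) := by
    ext i
    simp only [mem_filter, mem_range]
    omega
  rw [hL, h, hR]
  have hexp : ((2 * n + 1 : ℕ) : ℤ) - 2 * ν = 2 * n - 2 * ν + 1 := by push_cast; ring
  rw [hexp, neg_one_mul]
  congr 1
  refine Finset.sum_congr rfl fun i hi => ?_
  rw [hodd i (range_subset_range.mpr (by omega) hi)]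

/-- Corollary 2.3: binomial moment identities for an odd-degree formal weight
enumerator `W(x,y) = ∑_{i=0}^n A_i x^{2(n-i)+1} y^{2i}` divisible by two, with
`W^{σ_q}(x,y) = -W(x,y)`:
`∑_{i=0}^{⌊(2n+1-ν)/2⌋} C(2n+1-2i,ν) A_i
   = -q^{n-ν+1/2} ∑_{i=0}^{⌊ν/2⌋} C(2n+1-2i,2n+1-ν) A_i`
for `ν = 0, 1, …, 2n+1`.  (Here `q^{n-ν+1/2}` is written as `(√q)^{2n-2ν+1}`.) -/
theorem binomial_moments_odd_deg (n : ℕ) (hn : 1 ≤ n) (q : ℝ) (hq0 : 0 < q) (hq1 : q ≠ 1)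
    (A : ℕ → ℂ)
    (hW : ∀ x y : ℂ,
      (∑ i ∈ Finset.range (n + 1),
        A i * ((x + ((q : ℂ) - 1) * y) / (Real.sqrt q : ℂ)) ^ (2 * (n - i) + 1) *
          ((x - y) / (Real.sqrt q : ℂ)) ^ (2 * i))
        = -∑ i ∈ Finset.range (n + 1), A i * x ^ (2 * (n - i) + 1) * y ^ (2 * i)) :
    ∀ ν : ℕ, ν ≤ 2 * n + 1 →
      ∑ i ∈ Finset.range ((2 * n + 1 - ν) / 2 + 1), ((2 * n + 1 - 2 * i).choose ν : ℂ) * A i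
        = -((Real.sqrt q : ℂ)) ^ (2 * (n : ℤ) - 2 * (ν : ℤ) + 1) *
            ∑ i ∈ Finset.range (ν / 2 + 1),
              ((2 * n + 1 - 2 * i).choose (2 * n + 1 - ν) : ℂ) * A i :=
  binomial_moments_odd_deg_general n q hq0 A hW
end

section
/- Let q be a real number with q > 0 and q ≠ 1 and let A_1, A_2 be complex numbers. The polynomial W(x,y) = x^4 + A_1 x^2 y^2 + A_2 y^4 satisfies W((x+(q-1)y)/√q, (x-y)/√q) = -W(x,y) identically if and only if q = 2, A_1 = -6, and A_2 = 1. In particular, φ_4(x,y) = x^4 - 6 x^2 y^2 + y^4 is the unique formal weight enumerator of degree 4 divisible by two, and it has q = 2. -/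
/-! Clearing the denominators `√q⁴ = q²` turns the identity into the polynomial identity
`W(x + (q-1)y, x - y) = -q² W(x, y)`. Its `x³y` and `xy³` coefficients give
`4(q-1) + A₁(2q-4) = 4A₂ = 4(q-1)³ + A₁(2(q-1) - 2(q-1)²)`, whose difference is
`2(q-2) q (A₁ - 2(q-1)) = 0`. The branch `A₁ = 2(q-1)` forces `A₂ = (q-1)²`, and then the
`x⁴` coefficient reads `q² = -q²`, impossible for `q ≠ 0`; so `q = 2`, whence `A₂ = 1` and
`A₁ = -6`. -/

section

variable {K : Type*} [Field K]

def evenQuartic (A1 A2 x y : K) : K :=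
  x ^ 4 + A1 * x ^ 2 * y ^ 2 + A2 * y ^ 4

lemma evenQuartic_div (A1 A2 x y s : K) :
    evenQuartic A1 A2 (x / s) (y / s) = evenQuartic A1 A2 x y / s ^ 4 := by
  unfold evenQuartic
  ring

lemma forall_evenQuartic_div_iff {s q : K} (A1 A2 : K) (hs0 : s ≠ 0) (hs : s ^ 2 = q) :
    (∀ x y : K, evenQuartic A1 A2 ((x + (q - 1) * y) / s) ((x - y) / s) =
        -evenQuartic A1 A2 x y) ↔
      ∀ x y : K, evenQuartic A1 A2 (x + (q - 1) * y) (x - y) =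
        -(q ^ 2 * evenQuartic A1 A2 x y) := by
  have hs4 : s ^ 4 = q ^ 2 := by rw [← hs]; ring
  refine forall₂_congr fun x y => ?_
  rw [evenQuartic_div, hs4, div_eq_iff (by rw [← hs4]; exact pow_ne_zero 4 hs0)]
  constructor <;> intro h <;> linear_combination h

variable [CharZero K]

lemma eq_of_forall_evenQuartic_eq {q A1 A2 : K} (hq : q ≠ 0)
    (h : ∀ x y : K, evenQuartic A1 A2 (x + (q - 1) * y) (x - y) =
      -(q ^ 2 * evenQuartic A1 A2 x y)) :
    q = 2 ∧ A1 = -6 ∧ A2 = 1 := by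
  unfold evenQuartic at h
  have hx4 : 1 + A1 + A2 + q ^ 2 = 0 := by linear_combination h 1 0
  have hx3y : 4 * (q - 1) + A1 * (2 * (q - 1) - 2) - 4 * A2 = 0 := by
    linear_combination (2 / 3 : K) * h 1 1 - (2 / 3 : K) * h 1 (-1)
      - (1 / 12 : K) * h 1 2 + (1 / 12 : K) * h 1 (-2)
  have hxy3 : 4 * (q - 1) ^ 3 + A1 * (2 * (q - 1) - 2 * (q - 1) ^ 2) - 4 * A2 = 0 := by
    linear_combination (-1 / 6 : K) * h 1 1 + (1 / 6 : K) * h 1 (-1)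
      + (1 / 12 : K) * h 1 2 - (1 / 12 : K) * h 1 (-2)
  have key : (q - 2) * q * (A1 - 2 * (q - 1)) = 0 := by
    linear_combination (hx3y - hxy3) / 2
  rcases mul_eq_zero.mp key with hq2 | hA1
  · rcases mul_eq_zero.mp hq2 with hq2 | hq0
    · have hA2 : A2 = 1 := by linear_combination (-1 / 4 : K) * hx3y + (1 + A1 / 2) * hq2
      exact ⟨by linear_combination hq2, by linear_combination hx4 - (q + 2) * hq2 - hA2, hA2⟩
    · exact absurd hq0 hq
  · have hq_sq : q ^ 2 = 0 := by
      linear_combination (hx4 + hx3y / 4 - q / 2 * hA1) / 2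
    exact absurd (pow_eq_zero_iff two_ne_zero |>.mp hq_sq) hq

lemma forall_evenQuartic_eq_iff {q A1 A2 : K} (hq : q ≠ 0) :
    (∀ x y : K, evenQuartic A1 A2 (x + (q - 1) * y) (x - y) =
        -(q ^ 2 * evenQuartic A1 A2 x y)) ↔ q = 2 ∧ A1 = -6 ∧ A2 = 1 := by
  refine ⟨eq_of_forall_evenQuartic_eq hq, ?_⟩
  rintro ⟨rfl, rfl, rfl⟩ x y
  unfold evenQuartic
  ring

end

theorem fwe_degree_four_unique_general (q : ℝ) (hq0 : 0 < q) (A1 A2 : ℂ) :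
    (∀ x y : ℂ,
        ((x + ((q : ℂ) - 1) * y) / (Real.sqrt q : ℂ)) ^ 4 +
            A1 * ((x + ((q : ℂ) - 1) * y) / (Real.sqrt q : ℂ)) ^ 2 *
              ((x - y) / (Real.sqrt q : ℂ)) ^ 2 +
            A2 * ((x - y) / (Real.sqrt q : ℂ)) ^ 4
          = -(x ^ 4 + A1 * x ^ 2 * y ^ 2 + A2 * y ^ 4))
      ↔ (q = 2 ∧ A1 = -6 ∧ A2 = 1) := by
  have hs : ((Real.sqrt q : ℝ) : ℂ) ^ 2 = q := by exact_mod_cast Real.sq_sqrt hq0.le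
  have hs0 : ((Real.sqrt q : ℝ) : ℂ) ≠ 0 := by exact_mod_cast (Real.sqrt_pos.2 hq0).ne'
  have hq : (q : ℂ) ≠ 0 := by exact_mod_cast hq0.ne'
  refine ((forall_evenQuartic_div_iff A1 A2 hs0 hs).trans (forall_evenQuartic_eq_iff hq)).trans ?_
  norm_cast

/-- Case n=2 of the even-degree search: `W(x,y) = x⁴ + A₁x²y² + A₂y⁴` satisfies
`W^{σ_q} = -W` if and only if `q = 2`, `A₁ = -6` and `A₂ = 1`; that is,
`φ₄(x,y) = x⁴ - 6x²y² + y⁴` is the unique formal weight enumerator of degree 4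
divisible by two, and it has `q = 2`. -/
theorem fwe_degree_four_unique (q : ℝ) (hq0 : 0 < q) (hq1 : q ≠ 1) (A1 A2 : ℂ) :
    (∀ x y : ℂ,
        ((x + ((q : ℂ) - 1) * y) / (Real.sqrt q : ℂ)) ^ 4 +
            A1 * ((x + ((q : ℂ) - 1) * y) / (Real.sqrt q : ℂ)) ^ 2 *
              ((x - y) / (Real.sqrt q : ℂ)) ^ 2 +
            A2 * ((x - y) / (Real.sqrt q : ℂ)) ^ 4
          = -(x ^ 4 + A1 * x ^ 2 * y ^ 2 + A2 * y ^ 4))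
      ↔ (q = 2 ∧ A1 = -6 ∧ A2 = 1) :=
  fwe_degree_four_unique_general q hq0 A1 A2
end

section
/- Let q be a real number with q > 0 and q ≠ 1 and let A_1, A_2, A_3 be complex numbers. If the polynomial W(x,y) = x^6 + A_1 x^4 y^2 + A_2 x^2 y^4 + A_3 y^6 satisfies W((x+(q-1)y)/√q, (x-y)/√q) = -W(x,y) identically, then q = 2 or q = 4/3. -/
/-!
With `s = √q`, the matrix `σ = s⁻¹ [[1, q - 1], [1, -1]]` has the eigenvectors `(1 ± s, 1)`
(eigenvalues `±1`), so `W ∘ σ = -W` forces `W(1 ± s, 1) = 0` for the even form `W`. Writing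
`W(x, 1) = g(x²)` with `g` a monic cubic, `g` therefore has the roots `(1 ± s)²` and
`g(z) = (z² - 2(1 + q)z + (q - 1)²)(z - r)`. The identity at the points `(1, 0)` and `(0, 1)`
gives two more conditions on `r`, and eliminating `r` leaves `q (q - 2)(3q - 4) = 0`.
-/

section

variable {K : Type*} [Field K]

lemma eq_zero_of_eq_neg_self [NeZero (2 : K)] {a : K} (h : a = -a) : a = 0 := by
  have h2 : 2 * a = 0 := by linear_combination h
  simpa [two_ne_zero] using h2

def evenSextic (A1 A2 A3 x y : K) : K :=
  x ^ 6 + A1 * x ^ 4 * y ^ 2 + A2 * x ^ 2 * y ^ 4 + A3 * y ^ 6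

def monicCubic (a b c z : K) : K :=
  z ^ 3 + a * z ^ 2 + b * z + c

variable (A1 A2 A3 : K)

lemma evenSextic_div_div (x y s : K) :
    evenSextic A1 A2 A3 (x / s) (y / s) = evenSextic A1 A2 A3 x y / s ^ 6 := by
  simp only [evenSextic, div_pow]
  ring

lemma evenSextic_neg_neg (x y : K) : evenSextic A1 A2 A3 (-x) (-y) = evenSextic A1 A2 A3 x y := by
  simp only [evenSextic]
  ring

lemma evenSextic_neg_right (x y : K) : evenSextic A1 A2 A3 x (-y) = evenSextic A1 A2 A3 x y := by
  simp only [evenSextic]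
  ring

lemma evenSextic_one_right (x : K) : evenSextic A1 A2 A3 x 1 = monicCubic A1 A2 A3 (x ^ 2) := by
  simp only [evenSextic, monicCubic]
  ring

lemma monicCubic_eq_mul_of_roots {a b c z₁ z₂ : K} (hz : z₁ ≠ z₂)
    (h₁ : monicCubic a b c z₁ = 0) (h₂ : monicCubic a b c z₂ = 0) (z : K) :
    monicCubic a b c z = (z - z₁) * (z - z₂) * (z + a + z₁ + z₂) := by
  -- the difference of both sides is affine in `z` and vanishes at `z₁` and `z₂`
  have h : (z₁ - z₂) * (monicCubic a b c z - (z - z₁) * (z - z₂) * (z + a + z₁ + z₂)) = 0 := by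
    simp only [monicCubic] at h₁ h₂ ⊢
    linear_combination (z - z₂) * h₁ - (z - z₁) * h₂
  exact sub_eq_zero.mp ((mul_eq_zero.mp h).resolve_left (sub_ne_zero.mpr hz))

lemma sub_two_mul_three_mul_sub_four_eq_zero [NeZero (2 : K)] {q r : K} (hq₀ : q ≠ 0)
    (hq₁ : q ≠ 1) (h₁ : (q ^ 2 - 4 * q) * (1 - r) = -q ^ 3)
    (h₂ : (q - 1) ^ 2 * (q ^ 2 - 4 * q) * ((q - 1) ^ 2 - r) = q ^ 3 * ((q - 1) ^ 2 * r)) :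
    (q - 2) * (3 * q - 4) = 0 := by
  have hq₁' : (q - 1) ^ 2 ≠ 0 := pow_ne_zero 2 (sub_ne_zero.mpr hq₁)
  have h₁' : (q - 4) * (1 - r) = -q ^ 2 :=
    mul_left_cancel₀ hq₀ (by linear_combination h₁)
  have h₂' : (q - 4) * ((q - 1) ^ 2 - r) = q ^ 2 * r :=
    mul_left_cancel₀ (mul_ne_zero hq₀ hq₁') (by linear_combination h₂)
  -- eliminating `(q - 4) r = q² + q - 4` leaves `((q - 4)(q - 1))² = (q² + q - 4)²`, a difference of
  -- squares with the factors `8 - 6q` and `2q(q - 2)`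
  have h : 2 * 2 * q * ((q - 2) * (3 * q - 4)) = 0 := by
    linear_combination (q ^ 2 + q - 4) * h₁' - (q - 4) * h₂'
  simpa [hq₀, two_ne_zero] using h

end

section MacWilliams

variable {K : Type*} [Field K] {A1 A2 A3 q s : K}

variable (hs : s ^ 2 = q) (hs₀ : s ≠ 0)
  (hW : ∀ x y : K, evenSextic A1 A2 A3 ((x + (q - 1) * y) / s) ((x - y) / s) =
    -evenSextic A1 A2 A3 x y)
include hs hs₀ hW

lemma evenSextic_one_add_eq_zero [NeZero (2 : K)] : evenSextic A1 A2 A3 (1 + s) 1 = 0 := by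
  subst hs
  have h := hW (1 + s) 1
  rw [show (1 + s + (s ^ 2 - 1) * 1) / s = 1 + s by field_simp; ring,
    show (1 + s - 1) / s = 1 by field_simp; ring] at h
  exact eq_zero_of_eq_neg_self h

lemma evenSextic_one_sub_eq_zero [NeZero (2 : K)] : evenSextic A1 A2 A3 (1 - s) 1 = 0 := by
  subst hs
  have h := hW (1 - s) 1
  rw [show (1 - s + (s ^ 2 - 1) * 1) / s = -(1 - s) by field_simp; ring,
    show (1 - s - 1) / s = -1 by field_simp; ring, evenSextic_neg_neg] at h
  exact eq_zero_of_eq_neg_self h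

lemma evenSextic_one_one : evenSextic A1 A2 A3 1 1 = -q ^ 3 := by
  subst hs
  have h := hW 1 0
  rw [show (1 + (s ^ 2 - 1) * 0) / s = 1 / s by ring, sub_zero, evenSextic_div_div,
    div_eq_iff (pow_ne_zero 6 hs₀)] at h
  simp only [evenSextic] at h ⊢
  linear_combination h

lemma evenSextic_sub_one_one : evenSextic A1 A2 A3 (q - 1) 1 = -q ^ 3 * A3 := by
  subst hs
  have h := hW 0 1
  rw [zero_add, mul_one, zero_sub, evenSextic_div_div, evenSextic_neg_right,
    div_eq_iff (pow_ne_zero 6 hs₀)] at h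
  simp only [evenSextic] at h ⊢
  linear_combination h

theorem sub_two_mul_three_mul_sub_four_eq_zero_of_macWilliams [NeZero (2 : K)] (hq₁ : q ≠ 1) :
    (q - 2) * (3 * q - 4) = 0 := by
  have hroot₁ : monicCubic A1 A2 A3 ((1 + s) ^ 2) = 0 := by
    rw [← evenSextic_one_right]; exact evenSextic_one_add_eq_zero hs hs₀ hW
  have hroot₂ : monicCubic A1 A2 A3 ((1 - s) ^ 2) = 0 := by
    rw [← evenSextic_one_right]; exact evenSextic_one_sub_eq_zero hs hs₀ hW
  have hne : (1 + s) ^ 2 ≠ (1 - s) ^ 2 := by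
    intro h
    exact mul_ne_zero (mul_ne_zero two_ne_zero two_ne_zero) hs₀ (by linear_combination h)
  have hg := monicCubic_eq_mul_of_roots hne hroot₁ hroot₂
  have h₁ : monicCubic A1 A2 A3 1 = -q ^ 3 := by
    rw [← one_pow 2, ← evenSextic_one_right]; exact evenSextic_one_one hs hs₀ hW
  have h₂ : monicCubic A1 A2 A3 ((q - 1) ^ 2) = -q ^ 3 * monicCubic A1 A2 A3 0 := by
    rw [← evenSextic_one_right, evenSextic_sub_one_one hs hs₀ hW]
    simp [monicCubic]
  rw [hg] at h₁
  rw [hg, hg 0] at h₂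
  subst hs
  exact sub_two_mul_three_mul_sub_four_eq_zero (r := -(A1 + (1 + s) ^ 2 + (1 - s) ^ 2))
    (pow_ne_zero 2 hs₀) hq₁ (by linear_combination h₁) (by linear_combination h₂)

end MacWilliams

/-- Case n=3 of the even-degree search: if `W(x,y) = x⁶ + A₁x⁴y² + A₂x²y⁴ + A₃y⁶`
satisfies `W^{σ_q} = -W` for some `q > 0`, `q ≠ 1`, then `q = 2` or `q = 4/3`. -/
theorem fwe_degree_six_q_values (q : ℝ) (hq0 : 0 < q) (hq1 : q ≠ 1) (A1 A2 A3 : ℂ)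
    (hW : ∀ x y : ℂ,
        ((x + ((q : ℂ) - 1) * y) / (Real.sqrt q : ℂ)) ^ 6 +
            A1 * ((x + ((q : ℂ) - 1) * y) / (Real.sqrt q : ℂ)) ^ 4 *
              ((x - y) / (Real.sqrt q : ℂ)) ^ 2 +
            A2 * ((x + ((q : ℂ) - 1) * y) / (Real.sqrt q : ℂ)) ^ 2 *
              ((x - y) / (Real.sqrt q : ℂ)) ^ 4 +
            A3 * ((x - y) / (Real.sqrt q : ℂ)) ^ 6
          = -(x ^ 6 + A1 * x ^ 4 * y ^ 2 + A2 * x ^ 2 * y ^ 4 + A3 * y ^ 6)) :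
    q = 2 ∨ q = 4 / 3 := by
  have hs : ((Real.sqrt q : ℝ) : ℂ) ^ 2 = (q : ℂ) := by exact_mod_cast Real.sq_sqrt hq0.le
  have hs₀ : ((Real.sqrt q : ℝ) : ℂ) ≠ 0 := by exact_mod_cast (Real.sqrt_pos.mpr hq0).ne'
  have h := sub_two_mul_three_mul_sub_four_eq_zero_of_macWilliams hs hs₀ hW (by exact_mod_cast hq1)
  have hℝ : (q - 2) * (3 * q - 4) = 0 := by exact_mod_cast h
  rcases mul_eq_zero.mp hℝ with h | h
  · exact Or.inl (by linarith)
  · exact Or.inr (by linarith)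
end

section
/- Let q be a real number with q > 0 and q ≠ 1 and let A_1 be a complex number. The polynomial W(x,y) = x^3 + A_1 x y^2 satisfies W((x+(q-1)y)/√q, (x-y)/√q) = -W(x,y) identically if and only if q = 4 and A_1 = -9. In particular, φ_3(x,y) = x^3 - 9 x y^2 is the unique formal weight enumerator of degree 3 divisible by two, and it has q = 4. -/
/-! Multiplying the identity by `√q ^ 3` and evaluating it at `(0, 1)`, and at `(1, 1)` against
`(1, -1)` (where `W` takes the same value), gives two relations in which `√q` no longer occurs.
Together they force `A₁ = -(q - 1)²` and `2q(q - 1)(q - 4) = 0`. -/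

variable {K : Type*} [Field K]

theorem cubic_transform_relations {q s A : K} (hs : s ≠ 0)
    (h : ∀ x y : K, ((x + (q - 1) * y) / s) ^ 3 + A * ((x + (q - 1) * y) / s) * ((x - y) / s) ^ 2
      = -(x ^ 3 + A * x * y ^ 2)) :
    (q - 1) * ((q - 1) ^ 2 + A) = 0 ∧ q ^ 3 = (2 - q) ^ 3 + 4 * A * (2 - q) := by
  have h01 := h 0 1
  have h11 := h 1 1
  have h1m := h 1 (-1)
  field_simp at h01 h11 h1m
  constructor
  · linear_combination h01
  · linear_combination h11 - h1m

theorem eq_four_of_cubic_transform_relations [CharZero K] {q A : K} (hq0 : q ≠ 0) (hq1 : q ≠ 1)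
    (h₁ : (q - 1) * ((q - 1) ^ 2 + A) = 0) (h₂ : q ^ 3 = (2 - q) ^ 3 + 4 * A * (2 - q)) :
    q = 4 ∧ A = -9 := by
  have hA : A = -(q - 1) ^ 2 := by
    linear_combination (mul_eq_zero.mp h₁).resolve_left (sub_ne_zero.mpr hq1)
  have hq : 2 * q * (q - 1) * (q - 4) = 0 := by linear_combination -h₂ - 4 * (2 - q) * hA
  have hq4 : q = 4 := by simpa [hq0, hq1, sub_eq_zero] using hq
  refine ⟨hq4, ?_⟩
  rw [hA, hq4]
  norm_num

/-- Case n=1 of the odd-degree search: `W(x,y) = x³ + A₁xy²` satisfies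
`W^{σ_q} = -W` if and only if `q = 4` and `A₁ = -9`; that is,
`φ₃(x,y) = x³ - 9xy²` is the unique formal weight enumerator of degree 3
divisible by two, and it has `q = 4`. -/
theorem fwe_degree_three_unique (q : ℝ) (hq0 : 0 < q) (hq1 : q ≠ 1) (A1 : ℂ) :
    (∀ x y : ℂ,
        ((x + ((q : ℂ) - 1) * y) / (Real.sqrt q : ℂ)) ^ 3 +
            A1 * ((x + ((q : ℂ) - 1) * y) / (Real.sqrt q : ℂ)) *
              ((x - y) / (Real.sqrt q : ℂ)) ^ 2
          = -(x ^ 3 + A1 * x * y ^ 2))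
      ↔ (q = 4 ∧ A1 = -9) := by
  constructor
  · intro h
    have hs : (Real.sqrt q : ℂ) ≠ 0 := by exact_mod_cast (Real.sqrt_pos.mpr hq0).ne'
    obtain ⟨h₁, h₂⟩ := cubic_transform_relations hs h
    obtain ⟨hq4, hA⟩ := eq_four_of_cubic_transform_relations (by exact_mod_cast hq0.ne')
      (by exact_mod_cast hq1) h₁ h₂
    exact ⟨by exact_mod_cast hq4, hA⟩
  · rintro ⟨rfl, rfl⟩ x y
    rw [show Real.sqrt 4 = 2 by rw [show (4 : ℝ) = 2 ^ 2 by norm_num, Real.sqrt_sq zero_le_two]]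
    push_cast
    ring
end

section
/- Let q be a real number with q > 0 and q ≠ 1 and let A_1, A_2 be complex numbers. If the polynomial W(x,y) = x^5 + A_1 x^3 y^2 + A_2 x y^4 satisfies W((x+(q-1)y)/√q, (x-y)/√q) = -W(x,y) identically, then q = 4 or q = 6 - 2√5. -/
/-!
Clearing the factor `√q⁵`, the condition says that `W` is an eigenvector of the substitution
`(x, y) ↦ (x + (q-1)y, x - y)` with eigenvalue `k = -√q⁵`. Since `W` is odd in `x` and even in `y`,
any such eigenvector satisfies `W(x + (q-1)y, x - y) = W(x - (q-1)y, x + y)`, whatever `k` is.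
Evaluating this at `(0,1)`, `(q-1,1)` and `(1,1)` gives three linear equations for `A₁, A₂`
whose compatibility forces `q = 4` or `q² - 12q + 16 = 0`. In the second case the eigenvalue is
determined, `q³(q-2) = k(3q-4)`, and its sign rules out the root `6 + 2√5`.
-/

def quinticW {K : Type*} [CommRing K] (A₁ A₂ x y : K) : K :=
  x ^ 5 + A₁ * x ^ 3 * y ^ 2 + A₂ * x * y ^ 4

/-- The MacWilliams transform with its normalising factor `√q⁻⁵` absorbed into `k`. -/
def IsMacWilliamsEigen {K : Type*} [CommRing K] (q k A₁ A₂ : K) : Prop :=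
  ∀ x y, quinticW A₁ A₂ (x + (q - 1) * y) (x - y) = k * quinticW A₁ A₂ x y

section CommRing

variable {K : Type*} [CommRing K] {q k A₁ A₂ : K}

theorem quinticW_neg_left (A₁ A₂ x y : K) : quinticW A₁ A₂ (-x) y = -quinticW A₁ A₂ x y := by
  unfold quinticW; ring

theorem quinticW_neg_right (A₁ A₂ x y : K) : quinticW A₁ A₂ x (-y) = quinticW A₁ A₂ x y := by
  unfold quinticW; ring

theorem IsMacWilliamsEigen.symm (h : IsMacWilliamsEigen q k A₁ A₂) (x y : K) :
    quinticW A₁ A₂ (x + (q - 1) * y) (x - y) = quinticW A₁ A₂ (x - (q - 1) * y) (x + y) := by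
  have h' := h (-x) y
  rw [quinticW_neg_left, show -x + (q - 1) * y = -(x - (q - 1) * y) by ring,
    show -x - y = -(x + y) by ring, quinticW_neg_left, quinticW_neg_right, mul_neg, ← h x y] at h'
  exact (neg_injective h').symm

theorem IsMacWilliamsEigen.eval_one_one (h : IsMacWilliamsEigen q k A₁ A₂) :
    (q - 2) ^ 5 + 4 * A₁ * (q - 2) ^ 3 + 16 * A₂ * (q - 2) + q ^ 5 = 0 := by
  have h11 := h.symm 1 1
  unfold quinticW at h11
  linear_combination h11

end CommRing

section Field

variable {K : Type*} [Field K] {q k A₁ A₂ : K}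

theorem quinticW_div_div (A₁ A₂ x y c : K) :
    quinticW A₁ A₂ (x / c) (y / c) = quinticW A₁ A₂ x y / c ^ 5 := by
  unfold quinticW; ring

variable [NeZero (2 : K)]

theorem IsMacWilliamsEigen.eval_zero_one (h : IsMacWilliamsEigen q k A₁ A₂) (hq1 : q ≠ 1) :
    (q - 1) ^ 4 + A₁ * (q - 1) ^ 2 + A₂ = 0 := by
  have h01 := h.symm 0 1
  unfold quinticW at h01
  have : (2 * (q - 1)) * ((q - 1) ^ 4 + A₁ * (q - 1) ^ 2 + A₂) = 0 := by
    linear_combination h01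
  exact (mul_eq_zero.mp this).resolve_left (mul_ne_zero two_ne_zero (sub_ne_zero.mpr hq1))

theorem IsMacWilliamsEigen.eval_sub_one_one (h : IsMacWilliamsEigen q k A₁ A₂) (hq1 : q ≠ 1) :
    16 * (q - 1) ^ 4 + 4 * A₁ * (q - 1) ^ 2 * (q - 2) ^ 2 + A₂ * (q - 2) ^ 4 = 0 := by
  have hp1 := h.symm (q - 1) 1
  unfold quinticW at hp1
  have : (2 * (q - 1)) *
      (16 * (q - 1) ^ 4 + 4 * A₁ * (q - 1) ^ 2 * (q - 2) ^ 2 + A₂ * (q - 2) ^ 4) = 0 := by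
    linear_combination hp1
  exact (mul_eq_zero.mp this).resolve_left (mul_ne_zero two_ne_zero (sub_ne_zero.mpr hq1))

theorem IsMacWilliamsEigen.A₁_mul_sq (h : IsMacWilliamsEigen q k A₁ A₂) (hq0 : q ≠ 0)
    (hq1 : q ≠ 1) (hq4 : q ≠ 4) :
    A₁ * (q - 2) ^ 2 + ((q - 2) ^ 2 + 4) * (q - 1) ^ 2 = 0 := by
  have hne : q * (4 - q) * (q - 1) ^ 2 ≠ 0 :=
    mul_ne_zero (mul_ne_zero hq0 (sub_ne_zero.mpr hq4.symm)) (pow_ne_zero 2 (sub_ne_zero.mpr hq1))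
  have : q * (4 - q) * (q - 1) ^ 2 * (A₁ * (q - 2) ^ 2 + ((q - 2) ^ 2 + 4) * (q - 1) ^ 2) = 0 := by
    linear_combination h.eval_sub_one_one hq1 - (q - 2) ^ 4 * h.eval_zero_one hq1
  exact (mul_eq_zero.mp this).resolve_left hne

theorem IsMacWilliamsEigen.quadratic (h : IsMacWilliamsEigen q k A₁ A₂) (hq0 : q ≠ 0)
    (hq1 : q ≠ 1) (hq4 : q ≠ 4) : q ^ 2 - 12 * q + 16 = 0 := by
  have hne : 2 * q ^ 3 * (q - 1) ≠ 0 :=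
    mul_ne_zero (mul_ne_zero two_ne_zero (pow_ne_zero 3 hq0)) (sub_ne_zero.mpr hq1)
  have : 2 * q ^ 3 * (q - 1) * (q ^ 2 - 12 * q + 16) = 0 := by
    linear_combination (-(q - 2)) * h.eval_one_one + 16 * (q - 2) ^ 2 * h.eval_zero_one hq1
      + 4 * ((q - 2) ^ 2 - 4 * (q - 1) ^ 2) * h.A₁_mul_sq hq0 hq1 hq4
  exact (mul_eq_zero.mp this).resolve_left hne

theorem IsMacWilliamsEigen.eigenvalue_mul (h : IsMacWilliamsEigen q k A₁ A₂) (hq0 : q ≠ 0)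
    (hq1 : q ≠ 1) (hq4 : q ≠ 4) : q ^ 3 * (q - 2) = k * (3 * q - 4) := by
  have hA₁ := h.A₁_mul_sq hq0 hq1 hq4
  have hq2 : q ≠ 2 := by
    rintro rfl
    have : (2 : K) * 2 = 0 := by linear_combination hA₁
    exact mul_ne_zero two_ne_zero two_ne_zero this
  have h11 := h 1 1
  unfold quinticW at h11
  have : q ^ 2 * (q - 2) * (q ^ 3 * (q - 2) - k * (3 * q - 4)) = 0 := by
    linear_combination (q - 2) ^ 2 * h11
      + k * ((q - 2) ^ 2 * h.eval_zero_one hq1 + (1 - (q - 1) ^ 2) * hA₁)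
  exact sub_eq_zero.mp ((mul_eq_zero.mp this).resolve_left
    (mul_ne_zero (pow_ne_zero 2 hq0) (sub_ne_zero.mpr hq2)))

end Field

theorem eq_six_sub_two_sqrt_five {q : ℝ} (hq0 : 0 < q) (hquad : q ^ 2 - 12 * q + 16 = 0)
    (heig : q ^ 3 * (q - 2) = -Real.sqrt q ^ 5 * (3 * q - 4)) : q = 6 - 2 * Real.sqrt 5 := by
  have h5 : Real.sqrt 5 ^ 2 = 5 := Real.sq_sqrt (by norm_num)
  have h5gt : 2 < Real.sqrt 5 := by nlinarith [Real.sqrt_nonneg 5]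
  have hroots : (q - (6 - 2 * Real.sqrt 5)) * (q - (6 + 2 * Real.sqrt 5)) = 0 := by
    linear_combination hquad - 4 * h5
  refine sub_eq_zero.mp ((mul_eq_zero.mp hroots).resolve_right fun hq => ?_)
  have hq2 : 2 < q := by linarith
  have hlhs : 0 < q ^ 3 * (q - 2) := mul_pos (pow_pos hq0 3) (by linarith)
  have hrhs : 0 < Real.sqrt q ^ 5 * (3 * q - 4) :=
    mul_pos (pow_pos (Real.sqrt_pos.mpr hq0) 5) (by linarith)
  linarith

/-- Case n=2 of the odd-degree search: if `W(x,y) = x⁵ + A₁x³y² + A₂xy⁴`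
satisfies `W^{σ_q} = -W` for some `q > 0`, `q ≠ 1`, then `q = 4` or
`q = 6 - 2√5`. -/
theorem fwe_degree_five_q_values (q : ℝ) (hq0 : 0 < q) (hq1 : q ≠ 1) (A1 A2 : ℂ)
    (hW : ∀ x y : ℂ,
        ((x + ((q : ℂ) - 1) * y) / (Real.sqrt q : ℂ)) ^ 5 +
            A1 * ((x + ((q : ℂ) - 1) * y) / (Real.sqrt q : ℂ)) ^ 3 *
              ((x - y) / (Real.sqrt q : ℂ)) ^ 2 +
            A2 * ((x + ((q : ℂ) - 1) * y) / (Real.sqrt q : ℂ)) *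
              ((x - y) / (Real.sqrt q : ℂ)) ^ 4
          = -(x ^ 5 + A1 * x ^ 3 * y ^ 2 + A2 * x * y ^ 4)) :
    q = 4 ∨ q = 6 - 2 * Real.sqrt 5 := by
  have hs : (Real.sqrt q : ℂ) ≠ 0 := by exact_mod_cast (Real.sqrt_pos.mpr hq0).ne'
  have hE : IsMacWilliamsEigen (q : ℂ) (-(Real.sqrt q : ℂ) ^ 5) A1 A2 := by
    intro x y
    have h := hW x y
    change quinticW A1 A2 _ _ = -quinticW A1 A2 x y at h
    rw [quinticW_div_div, div_eq_iff (pow_ne_zero 5 hs)] at h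
    linear_combination h
  have hq0' : (q : ℂ) ≠ 0 := by exact_mod_cast hq0.ne'
  have hq1' : (q : ℂ) ≠ 1 := by exact_mod_cast hq1
  by_cases hq4 : q = 4
  · exact Or.inl hq4
  have hq4' : (q : ℂ) ≠ 4 := by exact_mod_cast hq4
  refine Or.inr (eq_six_sub_two_sqrt_five hq0 ?_ ?_)
  · exact_mod_cast hE.quadratic hq0' hq1' hq4'
  · exact_mod_cast hE.eigenvalue_mul hq0' hq1' hq4'
end

section
/- The polynomial φ_5(x,y) = x^5 + (-50 + 20√5) x^3 y^2 + (225 - 100√5) x y^4 satisfies φ_5((x+(q-1)y)/√q, (x-y)/√q) = -φ_5(x,y) identically with q = 6 - 2√5; that is, φ_5 is a formal weight enumerator divisible by two for q = 6 - 2√5. -/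
/-- `φ₅(x,y) = x⁵ + (-50 + 20√5)x³y² + (225 - 100√5)xy⁴`. -/
noncomputable def phi5 : ℂ → ℂ → ℂ := fun x y =>
  x ^ 5 + ((-50 + 20 * Real.sqrt 5 : ℝ) : ℂ) * x ^ 3 * y ^ 2
    + ((225 - 100 * Real.sqrt 5 : ℝ) : ℂ) * x * y ^ 4

/-- `q = 6 - 2√5`. -/
noncomputable def q5 : ℝ := 6 - 2 * Real.sqrt 5

lemma sqrt5_sq : Real.sqrt 5 ^ 2 = 5 := Real.sq_sqrt (by norm_num)

lemma sqrt5_gt_one : 1 < Real.sqrt 5 := by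
  nlinarith [sqrt5_sq, Real.sqrt_nonneg 5]

lemma sqrt_q5 : Real.sqrt q5 = Real.sqrt 5 - 1 := by
  have h : q5 = (Real.sqrt 5 - 1) ^ 2 := by
    have := sqrt5_sq; unfold q5; nlinarith
  rw [h, Real.sqrt_sq (by linarith [sqrt5_gt_one])]

lemma phi5_key (x y r : ℂ) (hr : r ^ 2 = 5) :
    (x + (5 - 2*r)*y)^5 + (-50 + 20*r)*(x + (5 - 2*r)*y)^3*(x - y)^2
      + (225 - 100*r)*(x + (5 - 2*r)*y)*(x - y)^4
    = -(x^5 + (-50 + 20*r)*x^3*y^2 + (225 - 100*r)*x*y^4) * (r - 1)^5 := by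
  linear_combination (400*y^5 - 560*y^5*r + 240*y^5*r^2 - 32*y^5*r^3
    - 1475*x*y^4 + 3115*x*y^4*r - 2225*x*y^4*r^2 + 725*x*y^4*r^3 - 100*x*y^4*r^4
    - 1520*x^2*y^3 + 1040*x^2*y^3*r - 160*x^2*y^3*r^2
    + 1030*x^3*y^2 - 1210*x^3*y^2*r + 550*x^3*y^2*r^2 - 150*x^3*y^2*r^3 + 20*x^3*y^2*r^4
    + 80*x^4*y - 35*x^5 + 15*x^5*r - 5*x^5*r^2 + x^5*r^3) * hr

/-- `φ₅` satisfies `φ₅^{σ_{6-2√5}} = -φ₅`, i.e. it is a formal weight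
enumerator divisible by two for `q = 6 - 2√5`. -/
theorem phi5_fwe :
    ∀ x y : ℂ,
      phi5 ((x + ((q5 : ℂ) - 1) * y) / (Real.sqrt q5 : ℂ))
          ((x - y) / (Real.sqrt q5 : ℂ))
        = -phi5 x y := by
  intro x y
  have hr : (Real.sqrt 5 : ℂ) ^ 2 = 5 := by
    rw [← Complex.ofReal_pow, sqrt5_sq]; norm_num
  have hne : (Real.sqrt 5 : ℂ) - 1 ≠ 0 := by
    intro h
    have h1 : (Real.sqrt 5 : ℂ) = 1 := by linear_combination h
    have h2 : Real.sqrt 5 = 1 := by exact_mod_cast h1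
    linarith [sqrt5_gt_one]
  have hq : ((q5 : ℝ) : ℂ) = 6 - 2 * (Real.sqrt 5 : ℂ) := by
    unfold q5; push_cast; ring
  have h5 : ((Real.sqrt 5 : ℂ) - 1) ^ 5 ≠ 0 := pow_ne_zero 5 hne
  rw [sqrt_q5]
  unfold phi5
  push_cast
  rw [hq]
  set r : ℂ := (Real.sqrt 5 : ℂ) with hrdef
  calc ((x + (6 - 2 * r - 1) * y) / (r - 1)) ^ 5
        + (-50 + 20 * r) * ((x + (6 - 2 * r - 1) * y) / (r - 1)) ^ 3
            * ((x - y) / (r - 1)) ^ 2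
        + (225 - 100 * r) * ((x + (6 - 2 * r - 1) * y) / (r - 1))
            * ((x - y) / (r - 1)) ^ 4
      = ((x + (5 - 2*r)*y)^5 + (-50 + 20*r)*(x + (5 - 2*r)*y)^3*(x - y)^2
          + (225 - 100*r)*(x + (5 - 2*r)*y)*(x - y)^4) * (1 / (r - 1))^5 := by
        ring
    _ = -(x^5 + (-50 + 20*r)*x^3*y^2 + (225 - 100*r)*x*y^4)
          * ((r - 1) * (r - 1)⁻¹)^5 := by
        rw [phi5_key x y r hr]; ring
    _ = -(x^5 + (-50 + 20*r)*x^3*y^2 + (225 - 100*r)*x*y^4) := by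
        rw [mul_inv_cancel₀ hne, one_pow, mul_one]
    _ = -(x ^ 5 + (-50 + 20 * r) * x ^ 3 * y ^ 2 + (225 - 100 * r) * x * y ^ 4) := by
        ring
end

section
/- Let q be a real number with q > 0 and q ≠ 1, let n ≥ d ≥ 2 be integers, and let W(x,y) = x^n + Σ_{i=d}^{n} A_i x^{n-i} y^i be a homogeneous polynomial with complex coefficients and A_d ≠ 0. Then there exists a unique polynomial P(T) ∈ ℂ[T] of degree at most n - d such that the coefficient of T^{n-d} in the formal power series expansion in T of P(T)·(y(1-T)+xT)^n / ((1-T)(1-qT)) (a power series whose coefficients are homogeneous polynomials in x, y) equals (W(x,y) - x^n)/(q-1). -/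
open Finset Polynomial



noncomputable def Sg (q : ℂ) (r : ℕ) : ℂ := ∑ j ∈ Finset.range (r + 1), q ^ j

lemma Sg_zero (q : ℂ) : Sg q 0 = 1 := by simp [Sg]

noncomputable def bcf (q : ℂ) (n : ℕ) (A : ℕ → ℂ) (k : ℕ) : ℂ :=
  (∑ i ∈ Finset.range (n + 1),
    (A i - if i = 0 then 1 else 0) * ((n - i).choose k : ℂ)) / (q - 1)

noncomputable def fcf (q : ℂ) (n d : ℕ) (A : ℕ → ℂ) (t : ℕ) : ℂ :=
  bcf q n A (n - d - t) / (n.choose (n - d - t) : ℂ) -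
    ∑ m ∈ (Finset.range t).attach, fcf q n d A m.1 * Sg q (t - m.1)
  termination_by t
  decreasing_by exact Finset.mem_range.mp m.2

lemma fcf_eq (q : ℂ) (n d : ℕ) (A : ℕ → ℂ) (t : ℕ) :
    fcf q n d A t = bcf q n A (n - d - t) / (n.choose (n - d - t) : ℂ) -
      ∑ m ∈ Finset.range t, fcf q n d A m * Sg q (t - m) := by
  rw [fcf, ← Finset.sum_attach (Finset.range t) (fun m => fcf q n d A m * Sg q (t - m))]

lemma sum_tri (N : ℕ) (g : ℕ → ℕ → ℂ) :
    ∑ m ∈ Finset.range (N + 1), ∑ k ∈ Finset.range (N - m + 1), g m k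
      = ∑ k ∈ Finset.range (N + 1), ∑ m ∈ Finset.range (N - k + 1), g m k := by
  have key : ∀ g : ℕ → ℕ → ℂ,
      ∑ m ∈ Finset.range (N + 1), ∑ k ∈ Finset.range (N - m + 1), g m k
        = ∑ m ∈ Finset.range (N + 1), ∑ k ∈ Finset.range (N + 1),
            if m + k ≤ N then g m k else 0 := by
    intro g
    refine Finset.sum_congr rfl fun m hm => ?_
    have hm' := Finset.mem_range.mp hm
    rw [Finset.sum_ite, Finset.sum_const_zero, add_zero]
    apply Finset.sum_congr _ (fun _ _ => rfl)
    ext k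
    simp only [Finset.mem_filter, Finset.mem_range]
    omega
  rw [key, key, Finset.sum_comm]
  refine Finset.sum_congr rfl fun k _ => Finset.sum_congr rfl fun m _ => ?_
  rw [Nat.add_comm]


lemma claim2 (q : ℂ) (n d : ℕ) (p : ℕ → ℂ) (x y : ℂ) :
    ∑ m ∈ Finset.range (n - d + 1), ∑ k ∈ Finset.range (n - d - m + 1),
        p m * (n.choose k : ℂ) * y ^ (n - k) * (x - y) ^ k * Sg q (n - d - m - k)
      = ∑ k ∈ Finset.range (n - d + 1),
          ((n.choose k : ℂ) * ∑ m ∈ Finset.range (n - d - k + 1), p m * Sg q (n - d - m - k))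
            * (y ^ (n - k) * (x - y) ^ k) := by
  rw [sum_tri (n - d) (fun m k => p m * (n.choose k : ℂ) * y ^ (n - k) * (x - y) ^ k * Sg q (n - d - m - k))]
  refine Finset.sum_congr rfl fun k _ => ?_
  rw [Finset.mul_sum, Finset.sum_mul]
  refine Finset.sum_congr rfl fun m _ => ?_
  ring

lemma claim1 (q : ℂ) (n d : ℕ) (hdn : d ≤ n) (A : ℕ → ℂ)
    (hA0 : A 0 = 1) (hAz : ∀ i, 0 < i → i < d → A i = 0) (x y : ℂ) :
    ((∑ i ∈ Finset.range (n + 1), A i * x ^ (n - i) * y ^ i) - x ^ n) / (q - 1)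
      = ∑ k ∈ Finset.range (n - d + 1), bcf q n A k * (y ^ (n - k) * (x - y) ^ k) := by
  have h1 : (∑ i ∈ Finset.range (n + 1), A i * x ^ (n - i) * y ^ i) - x ^ n
      = ∑ i ∈ Finset.range (n + 1),
          (A i - if i = 0 then 1 else 0) * x ^ (n - i) * y ^ i := by
    have hxn : ∑ i ∈ Finset.range (n + 1), (if i = 0 then (1:ℂ) else 0) * x ^ (n - i) * y ^ i
        = x ^ n := by
      rw [Finset.sum_eq_single 0]
      · simp
      · intro b _ hb; simp [hb]
      · intro h; simp at h
    rw [← hxn, ← Finset.sum_sub_distrib]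
    exact Finset.sum_congr rfl fun i _ => by ring
  rw [h1]
  have h2 : ∀ i ∈ Finset.range (n + 1),
      (A i - if i = 0 then 1 else 0) * x ^ (n - i) * y ^ i
        = ∑ k ∈ Finset.range (n + 1),
            (A i - if i = 0 then 1 else 0) * ((n - i).choose k : ℂ)
              * (y ^ (n - k) * (x - y) ^ k) := by
    intro i hi
    have hi' : i ≤ n := Nat.lt_succ_iff.mp (Finset.mem_range.mp hi)
    have hx : x ^ (n - i) = ((x - y) + y) ^ (n - i) := by ring_nf
    rw [hx, add_pow, Finset.mul_sum, Finset.sum_mul]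
    have h3 : ∑ k ∈ Finset.range (n - i + 1),
          (A i - if i = 0 then 1 else 0) * ((n - i).choose k : ℂ)
            * (y ^ (n - k) * (x - y) ^ k)
        = ∑ k ∈ Finset.range (n + 1),
          (A i - if i = 0 then 1 else 0) * ((n - i).choose k : ℂ)
            * (y ^ (n - k) * (x - y) ^ k) := by
      apply Finset.sum_subset (Finset.range_subset_range.mpr (by omega))
      intro k _ hk
      have : n - i < k := by
        simp only [Finset.mem_range] at hk; omega
      rw [Nat.choose_eq_zero_of_lt this]
      simp
    rw [← h3]
    refine Finset.sum_congr rfl fun k hk => ?_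
    have hk' : k ≤ n - i := Nat.lt_succ_iff.mp (Finset.mem_range.mp hk)
    have hy : y ^ (n - k) = y ^ (n - i - k) * y ^ i := by
      rw [← pow_add]; congr 1; omega
    rw [hy]; ring
  rw [Finset.sum_congr rfl h2, Finset.sum_comm]
  have h4 : ∑ k ∈ Finset.range (n - d + 1), ∑ i ∈ Finset.range (n + 1),
        (A i - if i = 0 then 1 else 0) * ((n - i).choose k : ℂ)
          * (y ^ (n - k) * (x - y) ^ k)
      = ∑ k ∈ Finset.range (n + 1), ∑ i ∈ Finset.range (n + 1),
        (A i - if i = 0 then 1 else 0) * ((n - i).choose k : ℂ)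
          * (y ^ (n - k) * (x - y) ^ k) := by
    apply Finset.sum_subset (Finset.range_subset_range.mpr (by omega))
    intro k hk hk'
    apply Finset.sum_eq_zero
    intro i hi
    have hi' : i ≤ n := Nat.lt_succ_iff.mp (Finset.mem_range.mp hi)
    have hknd : n - d < k := by
      simp only [Finset.mem_range] at hk'; omega
    by_cases h0 : i = 0
    · simp [h0, hA0]
    · by_cases hid : i < d
      · rw [hAz i (Nat.pos_of_ne_zero h0) hid]
        simp [h0]
      · have : n - i < k := by omega
        rw [Nat.choose_eq_zero_of_lt this]
        simp
  rw [← h4, Finset.sum_div]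
  refine Finset.sum_congr rfl fun k _ => ?_
  rw [bcf, ← Finset.sum_mul, mul_div_right_comm]

-- extract coefficients from a functional identity
lemma coeff_ext (N : ℕ) (c b : ℕ → ℂ)
    (h : ∀ u : ℂ, ∑ k ∈ Finset.range (N + 1), c k * u ^ k
      = ∑ k ∈ Finset.range (N + 1), b k * u ^ k) :
    ∀ k ∈ Finset.range (N + 1), c k = b k := by
  set p : Polynomial ℂ := ∑ k ∈ Finset.range (N + 1), Polynomial.C (c k - b k) * X ^ k with hp
  have hz : p = 0 := by
    apply Polynomial.funext
    intro u
    simp only [hp, eval_finset_sum, eval_mul, eval_C, eval_pow, eval_X, eval_zero]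
    simp only [sub_mul]
    rw [Finset.sum_sub_distrib, h u, sub_self]
  intro k hk
  have hcoeff : p.coeff k = c k - b k := by
    simp only [hp, finset_sum_coeff, coeff_C_mul, coeff_X_pow, mul_ite, mul_one, mul_zero]
    rw [Finset.sum_ite_eq (Finset.range (N + 1)) k (fun j => c j - b j)]
    simp [hk]
  rw [hz] at hcoeff
  simp only [coeff_zero] at hcoeff
  linear_combination -hcoeff

-- triangular system ↔ explicit recursive solution
lemma tri_iff (q : ℂ) (n d : ℕ) (A : ℕ → ℂ) (p : ℕ → ℂ) :
    (∀ t ∈ Finset.range (n - d + 1),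
        ∑ m ∈ Finset.range (t + 1), p m * Sg q (t - m)
          = bcf q n A (n - d - t) / (n.choose (n - d - t) : ℂ))
      ↔ ∀ t ∈ Finset.range (n - d + 1), p t = fcf q n d A t := by
  constructor
  · intro h t ht
    induction t using Nat.strong_induction_on with
    | _ t ih =>
      have ht' := Finset.mem_range.mp ht
      have heq := h t ht
      rw [Finset.sum_range_succ] at heq
      have hS : Sg q (t - t) = 1 := by simp [Sg]
      rw [hS, mul_one] at heq
      have hsum : ∑ m ∈ Finset.range t, p m * Sg q (t - m)
          = ∑ m ∈ Finset.range t, fcf q n d A m * Sg q (t - m) := by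
        refine Finset.sum_congr rfl fun m hm => ?_
        have hm' := Finset.mem_range.mp hm
        rw [ih m hm' (Finset.mem_range.mpr (by omega))]
      rw [fcf_eq, ← heq, hsum]
      ring
  · intro h t ht
    have ht' := Finset.mem_range.mp ht
    have hsum : ∑ m ∈ Finset.range (t + 1), p m * Sg q (t - m)
        = ∑ m ∈ Finset.range (t + 1), fcf q n d A m * Sg q (t - m) := by
      refine Finset.sum_congr rfl fun m hm => ?_
      have hm' := Finset.mem_range.mp hm
      rw [h m (Finset.mem_range.mpr (by omega))]
    rw [hsum, Finset.sum_range_succ]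
    have hS : Sg q (t - t) = 1 := by simp [Sg]
    rw [hS, mul_one, fcf_eq]
    ring

-- the main condition, rewritten via the c_k = b_k equations
lemma cond_iff (q : ℂ) (n d : ℕ) (hdn : d ≤ n) (A : ℕ → ℂ)
    (hA0 : A 0 = 1) (hAz : ∀ i, 0 < i → i < d → A i = 0) (p : ℕ → ℂ) :
    (∀ x y : ℂ,
        (∑ m ∈ Finset.range (n - d + 1), ∑ k ∈ Finset.range (n - d - m + 1),
            p m * (n.choose k : ℂ) * y ^ (n - k) * (x - y) ^ k * Sg q (n - d - m - k))
          = ((∑ i ∈ Finset.range (n + 1), A i * x ^ (n - i) * y ^ i) - x ^ n) / (q - 1))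
      ↔ ∀ k ∈ Finset.range (n - d + 1),
          (n.choose k : ℂ) * (∑ m ∈ Finset.range (n - d - k + 1), p m * Sg q (n - d - m - k))
            = bcf q n A k := by
  constructor
  · intro h
    apply coeff_ext
    intro u
    have hu := h (u + 1) 1
    rw [claim2, claim1 q n d hdn A hA0 hAz] at hu
    simpa using hu
  · intro h x y
    rw [claim2, claim1 q n d hdn A hA0 hAz]
    refine Finset.sum_congr rfl fun k hk => ?_
    rw [h k hk]

lemma cond_iff2 (q : ℂ) (n d : ℕ) (hdn : d ≤ n) (A : ℕ → ℂ) (p : ℕ → ℂ) :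
    (∀ k ∈ Finset.range (n - d + 1),
        (n.choose k : ℂ) * (∑ m ∈ Finset.range (n - d - k + 1), p m * Sg q (n - d - m - k))
          = bcf q n A k)
      ↔ ∀ t ∈ Finset.range (n - d + 1),
          ∑ m ∈ Finset.range (t + 1), p m * Sg q (t - m)
            = bcf q n A (n - d - t) / (n.choose (n - d - t) : ℂ) := by
  have hC : ∀ k, k ≤ n - d → ((n.choose k : ℂ)) ≠ 0 := by
    intro k hk
    exact_mod_cast (Nat.choose_pos (by omega : k ≤ n)).ne'
  constructor
  · intro h t ht
    have ht' := Finset.mem_range.mp ht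
    have hk : n - d - t ∈ Finset.range (n - d + 1) := Finset.mem_range.mpr (by omega)
    have := h (n - d - t) hk
    have hrange : n - d - (n - d - t) + 1 = t + 1 := by omega
    rw [hrange] at this
    have hsum : ∑ m ∈ Finset.range (t + 1), p m * Sg q (n - d - m - (n - d - t))
        = ∑ m ∈ Finset.range (t + 1), p m * Sg q (t - m) := by
      refine Finset.sum_congr rfl fun m hm => ?_
      have hm' := Finset.mem_range.mp hm
      congr 2
      omega
    rw [hsum] at this
    rw [eq_div_iff (hC _ (by omega)), mul_comm]
    exact this
  · intro h k hk
    have hk' := Finset.mem_range.mp hk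
    have ht : n - d - k ∈ Finset.range (n - d + 1) := Finset.mem_range.mpr (by omega)
    have := h (n - d - k) ht
    have hrange : n - d - k + 1 = n - d - k + 1 := rfl
    have hsum : ∑ m ∈ Finset.range (n - d - k + 1), p m * Sg q (n - d - k - m)
        = ∑ m ∈ Finset.range (n - d - k + 1), p m * Sg q (n - d - m - k) := by
      refine Finset.sum_congr rfl fun m hm => ?_
      congr 2
      omega
    rw [hsum] at this
    have hkk : n - d - (n - d - k) = k := by omega
    rw [hkk] at this
    rw [this, mul_div_cancel₀ _ (hC _ (by omega))]

/-- Existence and uniqueness of the zeta polynomial (Definition 4.1).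
For `W(x,y) = x^n + ∑_{i=d}^n A_i x^{n-i} y^i` (encoded via coefficients
`A 0 = 1`, `A i = 0` for `0 < i < d`, `A d ≠ 0`) with `n ≥ d ≥ 2` and a real
`q > 0`, `q ≠ 1`, there is a unique polynomial `P(T) ∈ ℂ[T]` of degree at most
`n - d` such that the coefficient of `T^{n-d}` in the power series
`P(T)·(y(1-T)+xT)^n / ((1-T)(1-qT))` equals `(W(x,y) - x^n)/(q-1)`.
Here that coefficient is written out using
`(y(1-T)+xT)^n = ∑_k C(n,k) y^{n-k} (x-y)^k T^k` and
`1/((1-T)(1-qT)) = ∑_m (∑_{j=0}^m q^j) T^m`. -/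
theorem zeta_polynomial_exists_unique (q : ℝ) (hq0 : 0 < q) (hq1 : q ≠ 1)
    (n d : ℕ) (hd2 : 2 ≤ d) (hdn : d ≤ n) (A : ℕ → ℂ)
    (hA0 : A 0 = 1) (hAz : ∀ i, 0 < i → i < d → A i = 0) (hAd : A d ≠ 0) :
    ∃! P : Polynomial ℂ, P.degree ≤ (n - d : ℕ) ∧
      ∀ x y : ℂ,
        (∑ m ∈ Finset.range (n - d + 1), ∑ k ∈ Finset.range (n - d - m + 1),
            P.coeff m * (n.choose k : ℂ) * y ^ (n - k) * (x - y) ^ k *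
              ∑ j ∈ Finset.range (n - d - m - k + 1), (q : ℂ) ^ j)
          = ((∑ i ∈ Finset.range (n + 1), A i * x ^ (n - i) * y ^ i) - x ^ n) /
              ((q : ℂ) - 1) := by
  have key : ∀ P : Polynomial ℂ,
      (∀ x y : ℂ,
        (∑ m ∈ Finset.range (n - d + 1), ∑ k ∈ Finset.range (n - d - m + 1),
            P.coeff m * (n.choose k : ℂ) * y ^ (n - k) * (x - y) ^ k *
              ∑ j ∈ Finset.range (n - d - m - k + 1), (q : ℂ) ^ j)
          = ((∑ i ∈ Finset.range (n + 1), A i * x ^ (n - i) * y ^ i) - x ^ n) /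
              ((q : ℂ) - 1))
      ↔ ∀ t ∈ Finset.range (n - d + 1), P.coeff t = fcf (q : ℂ) n d A t := by
    intro P
    rw [show (∀ x y : ℂ,
        (∑ m ∈ Finset.range (n - d + 1), ∑ k ∈ Finset.range (n - d - m + 1),
            P.coeff m * (n.choose k : ℂ) * y ^ (n - k) * (x - y) ^ k *
              ∑ j ∈ Finset.range (n - d - m - k + 1), (q : ℂ) ^ j)
          = ((∑ i ∈ Finset.range (n + 1), A i * x ^ (n - i) * y ^ i) - x ^ n) /
              ((q : ℂ) - 1))
      = (∀ x y : ℂ,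
        (∑ m ∈ Finset.range (n - d + 1), ∑ k ∈ Finset.range (n - d - m + 1),
            P.coeff m * (n.choose k : ℂ) * y ^ (n - k) * (x - y) ^ k *
              Sg (q : ℂ) (n - d - m - k))
          = ((∑ i ∈ Finset.range (n + 1), A i * x ^ (n - i) * y ^ i) - x ^ n) /
              ((q : ℂ) - 1)) from rfl]
    rw [cond_iff (q : ℂ) n d hdn A hA0 hAz P.coeff,
        cond_iff2 (q : ℂ) n d hdn A P.coeff,
        tri_iff (q : ℂ) n d A P.coeff]
  set Pd : Polynomial ℂ :=
    ∑ t ∈ Finset.range (n - d + 1), Polynomial.C (fcf (q : ℂ) n d A t) * X ^ t with hPd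
  have hPdcoeff : ∀ t ∈ Finset.range (n - d + 1), Pd.coeff t = fcf (q : ℂ) n d A t := by
    intro t ht
    simp only [hPd, finset_sum_coeff, coeff_C_mul, coeff_X_pow, mul_ite, mul_one, mul_zero]
    rw [Finset.sum_ite_eq (Finset.range (n - d + 1)) t (fun j => fcf (q : ℂ) n d A j)]
    simp [ht]
  have hPddeg : Pd.degree ≤ (n - d : ℕ) := by
    refine (Polynomial.degree_sum_le _ _).trans (Finset.sup_le fun t ht => ?_)
    refine (Polynomial.degree_C_mul_X_pow_le _ _).trans ?_
    exact_mod_cast Nat.lt_succ_iff.mp (Finset.mem_range.mp ht)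
  refine ⟨Pd, ⟨hPddeg, (key Pd).mpr hPdcoeff⟩, ?_⟩
  rintro Q ⟨hQdeg, hQ⟩
  have hQcoeff := (key Q).mp hQ
  apply Polynomial.ext
  intro t
  by_cases ht : t ∈ Finset.range (n - d + 1)
  · rw [hQcoeff t ht, hPdcoeff t ht]
  · have ht' : (n - d : ℕ) < t := by
      simp only [Finset.mem_range] at ht; omega
    rw [Polynomial.coeff_eq_zero_of_degree_lt, Polynomial.coeff_eq_zero_of_degree_lt]
    · exact lt_of_le_of_lt hPddeg (by exact_mod_cast ht')
    · exact lt_of_le_of_lt hQdeg (by exact_mod_cast ht')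
end

section
/- Let q be a real number with q > 0 and q ≠ 1, let n ≥ d ≥ 2 be integers, and let W(x,y) = x^n + Σ_{i=d}^{n} A_i x^{n-i} y^i be a homogeneous polynomial with complex coefficients, A_d ≠ 0, satisfying W((x+(q-1)y)/√q, (x-y)/√q) = -W(x,y) identically. Let P(T) be the zeta polynomial of W. Then P has degree exactly 2g := n + 2 - 2d, and P satisfies the functional equation P(T) = -P(1/(qT)) · q^{(n+2-2d)/2} · T^{n+2-2d} for all nonzero T ∈ ℂ. -/
/-!
Put `s = √q`, `G = n + 2 - 2d` and expand `W(x + 1, 1) = ∑ B_k x^k`. At `(x + 1, 1)` the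
MacWilliams identity becomes `q^(n-k) B_(n-k) = -s^n B_k`, and the defining property of `P` becomes
`B_k = C(n,k) b_(n-k)`, where `∑ b_k T^k = 1/(1 - T) + (q - 1) T^d P(T) / ((1 - T)(1 - qT))`.
Hence `q^(n-k) b_k = -s^n b_(n-k)`. Multiplying the series by `(1 - T)(1 - qT)` gives
`(q - 1) P_m = b_(m+d) - (1 + q) b_(m+d-1) + q b_(m+d-2)`, and the reflection of `b` turns into
`s^G P_m = -q^m P_(G-m)`, which is the functional equation. Since `b_k = 1` for `k < d`, the same
reflection kills `P_m` for `m > G`, and at `k = d - 1` it would read `q^(n-d+1) = -s^n`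
if `G ≤ 0`.
-/

open Finset Polynomial

variable {K : Type*} [Field K]

noncomputable def zetaSeries (q : K) (P : K[X]) : PowerSeries K :=
  (P : PowerSeries K) * (PowerSeries.mk 1 * PowerSeries.mk (q ^ ·))

theorem zetaSeries_mul (q : K) (P : K[X]) :
    zetaSeries q P * ((1 - PowerSeries.X) * (1 - PowerSeries.C q * PowerSeries.X)) =
      (P : PowerSeries K) := by
  have hq : PowerSeries.mk (q ^ ·) * (1 - PowerSeries.C q * PowerSeries.X) = 1 := by
    have := congrArg (PowerSeries.rescale q) (PowerSeries.mk_one_mul_one_sub_eq_one K)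
    simpa [PowerSeries.rescale_mk, PowerSeries.rescale_X] using this
  rw [zetaSeries, mul_assoc, mul_mul_mul_comm, PowerSeries.mk_one_mul_one_sub_eq_one, hq, one_mul,
    mul_one]

theorem coeff_zetaSeries (q : K) (P : K[X]) (r : ℕ) :
    PowerSeries.coeff r (zetaSeries q P) =
      ∑ m ∈ range (r + 1), P.coeff m * ∑ j ∈ range (r - m + 1), q ^ j := by
  rw [zetaSeries, PowerSeries.coeff_mul, Nat.sum_antidiagonal_eq_sum_range_succ
    (fun i j => PowerSeries.coeff i (P : PowerSeries K) * PowerSeries.coeff j _)]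
  refine sum_congr rfl fun m _ => ?_
  rw [Polynomial.coeff_coe, PowerSeries.coeff_mul, Nat.sum_antidiagonal_eq_sum_range_succ
    (fun i j => PowerSeries.coeff i (PowerSeries.mk (1 : ℕ → K)) * PowerSeries.coeff j _),
    ← sum_range_reflect]
  refine congrArg _ (sum_congr rfl fun j hj => ?_)
  simp only [PowerSeries.coeff_mk, Pi.one_apply, one_mul]
  congr 1
  have := mem_range.mp hj
  omega

def secondDiff (q : K) (b : ℕ → K) (k : ℕ) : K := b (k + 2) - (1 + q) * b (k + 1) + q * b k

theorem coeff_mul_one_sub_mul_one_sub (q : K) (F : PowerSeries K) (k : ℕ) :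
    PowerSeries.coeff (k + 2)
        (F * ((1 - PowerSeries.X) * (1 - PowerSeries.C q * PowerSeries.X))) =
      secondDiff q (PowerSeries.coeff · F) k := by
  have hexpand : F * ((1 - PowerSeries.X) * (1 - PowerSeries.C q * PowerSeries.X)) =
      F - PowerSeries.C (1 + q) * (F * PowerSeries.X) +
        PowerSeries.C q * (F * PowerSeries.X ^ 2) := by
    simp only [map_add, map_one]
    ring
  rw [hexpand, secondDiff, map_add, map_sub, PowerSeries.coeff_C_mul, PowerSeries.coeff_C_mul,
    PowerSeries.coeff_succ_mul_X, PowerSeries.coeff_mul_X_pow]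

noncomputable def zetaMoment (q : K) (d : ℕ) (P : K[X]) (k : ℕ) : K :=
  1 + (q - 1) * PowerSeries.coeff k (PowerSeries.X ^ d * zetaSeries q P)

theorem zetaMoment_of_lt (q : K) {d : ℕ} (P : K[X]) {k : ℕ} (hk : k < d) :
    zetaMoment q d P k = 1 := by
  rw [zetaMoment, PowerSeries.coeff_X_pow_mul', if_neg (not_le.mpr hk), mul_zero, add_zero]

theorem zetaMoment_self (q : K) (d : ℕ) (P : K[X]) :
    zetaMoment q d P d = 1 + (q - 1) * P.coeff 0 := by
  rw [zetaMoment, PowerSeries.coeff_X_pow_mul', if_pos le_rfl, Nat.sub_self, coeff_zetaSeries]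
  simp

theorem secondDiff_zetaMoment (q : K) {d : ℕ} (hd : 2 ≤ d) (P : K[X]) (m : ℕ) :
    secondDiff q (zetaMoment q d P) (m + d - 2) = (q - 1) * P.coeff m := by
  have h := coeff_mul_one_sub_mul_one_sub q (PowerSeries.X ^ d * zetaSeries q P) (m + d - 2)
  rw [mul_assoc, zetaSeries_mul, show m + d - 2 + 2 = m + d by omega,
    PowerSeries.coeff_X_pow_mul, Polynomial.coeff_coe] at h
  rw [h]
  simp only [secondDiff, zetaMoment]
  ring

def binomialMoment (n : ℕ) (A : ℕ → K) (k : ℕ) : K :=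
  ∑ i ∈ range (n + 1), A i * ((n - i).choose k : K)

theorem coeff_sum_X_add_one_pow (n : ℕ) (A : ℕ → K) (k : ℕ) :
    (∑ i ∈ range (n + 1), C (A i) * (X + 1) ^ (n - i)).coeff k = binomialMoment n A k := by
  simp only [finsetSum_coeff, coeff_C_mul, coeff_X_add_one_pow, binomialMoment]

theorem binomialMoment_sub_self {n d : ℕ} (hd : 0 < d) (hdn : d ≤ n) {A : ℕ → K}
    (hA0 : A 0 = 1) (hAz : ∀ i, 0 < i → i < d → A i = 0) :
    binomialMoment n A (n - d) = n.choose d + A d := by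
  rw [binomialMoment, sum_eq_add_of_mem 0 d (by simp) (by simp; omega) hd.ne, hA0, Nat.sub_zero,
    Nat.choose_symm hdn, Nat.choose_self, Nat.cast_one, one_mul, mul_one]
  intro i hi ⟨hi0, hid⟩
  have hin := mem_range.mp hi
  rcases lt_or_gt_of_ne hid with hlt | hgt
  · rw [hAz i (Nat.pos_of_ne_zero hi0) hlt, zero_mul]
  · rw [Nat.choose_eq_zero_of_lt (by omega), Nat.cast_zero, mul_zero]

theorem zetaSum_eq_sum_choose (q : K) {n d : ℕ} (hdn : d ≤ n) (P : K[X]) (x y : K) :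
    (∑ m ∈ range (n - d + 1), ∑ k ∈ range (n - d - m + 1),
        P.coeff m * (n.choose k : K) * y ^ (n - k) * (x - y) ^ k *
          ∑ j ∈ range (n - d - m - k + 1), q ^ j) =
      ∑ k ∈ range (n + 1), (n.choose k : K) *
        PowerSeries.coeff (n - k) (PowerSeries.X ^ d * zetaSeries q P) *
          y ^ (n - k) * (x - y) ^ k := by
  rw [sum_comm' (t' := range (n - d + 1)) (s' := fun k => range (n - d - k + 1))
      (fun m k => by simp only [mem_range]; omega),
    ← sum_subset (range_subset_range.mpr (by omega : n - d + 1 ≤ n + 1))]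
  · refine sum_congr rfl fun k hk => ?_
    have hk := mem_range.mp hk
    rw [PowerSeries.coeff_X_pow_mul', if_pos (by omega), coeff_zetaSeries, mul_sum, sum_mul,
      sum_mul]
    refine sum_congr (by congr 2; omega) fun m hm => ?_
    rw [show n - d - m - k = n - k - d - m by omega]
    ring
  · intro k hk hk'
    rw [mem_range] at hk hk'
    rw [PowerSeries.coeff_X_pow_mul', if_neg (by omega)]
    ring

theorem binomialMoment_eq_choose_mul_zetaMoment [CharZero K] {q : K} (hq : q ≠ 1) {n d : ℕ}
    (hdn : d ≤ n) (A : ℕ → K) (P : K[X])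
    (hP : ∀ x y : K,
      (∑ m ∈ range (n - d + 1), ∑ k ∈ range (n - d - m + 1),
          P.coeff m * (n.choose k : K) * y ^ (n - k) * (x - y) ^ k *
            ∑ j ∈ range (n - d - m - k + 1), q ^ j)
        = ((∑ i ∈ range (n + 1), A i * x ^ (n - i) * y ^ i) - x ^ n) / (q - 1))
    (k : ℕ) : binomialMoment n A k = n.choose k * zetaMoment q d P (n - k) := by
  set u := fun j => PowerSeries.coeff j (PowerSeries.X ^ d * zetaSeries q P)
  have hq' : q - 1 ≠ 0 := sub_ne_zero.mpr hq
  have hpoly : ∑ j ∈ range (n + 1), C ((n.choose j : K) * ((q - 1) * u (n - j))) * X ^ j =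
      ∑ i ∈ range (n + 1), C (A i) * (X + 1) ^ (n - i) - (X + 1) ^ n := by
    refine Polynomial.funext fun x => ?_
    have h := hP (x + 1) 1
    rw [zetaSum_eq_sum_choose q hdn, eq_div_iff hq'] at h
    simp only [one_pow, mul_one, add_sub_cancel_right] at h
    simp only [eval_finsetSum, eval_sub, eval_mul, eval_pow, eval_C, eval_X, eval_add, eval_one]
    rw [← h, sum_mul]
    refine sum_congr rfl fun j _ => ?_
    simp only [u]
    ring
  have h := congrArg (coeff · k) hpoly
  rw [coeff_sub, coeff_sum_X_add_one_pow, coeff_X_add_one_pow, finsetSum_coeff] at h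
  simp only [coeff_C_mul_X_pow, sum_ite_eq, mem_range] at h
  rw [zetaMoment, mul_add, mul_one, ← sub_eq_iff_eq_add', ← h]
  split_ifs with hk
  · rfl
  · rw [Nat.choose_eq_zero_of_lt (by omega), Nat.cast_zero, zero_mul]

theorem binomialMoment_reflect [CharZero K] {q s : K} (hs : s ≠ 0) {n : ℕ} (A : ℕ → K)
    (hW : ∀ x y : K,
      (∑ i ∈ range (n + 1), A i * ((x + (q - 1) * y) / s) ^ (n - i) * ((x - y) / s) ^ i)
        = -∑ i ∈ range (n + 1), A i * x ^ (n - i) * y ^ i)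
    {k : ℕ} (hk : k ≤ n) :
    q ^ (n - k) * binomialMoment n A (n - k) = -s ^ n * binomialMoment n A k := by
  have hpoly : ∑ i ∈ range (n + 1), C (A i) * (X + C q) ^ (n - i) * X ^ i =
      C (-s ^ n) * ∑ i ∈ range (n + 1), C (A i) * (X + 1) ^ (n - i) := by
    refine Polynomial.funext fun x => ?_
    have h := hW (x + 1) 1
    have hscale : ∑ i ∈ range (n + 1), A i * ((x + 1 + (q - 1) * 1) / s) ^ (n - i) *
        ((x + 1 - 1) / s) ^ i =
          (∑ i ∈ range (n + 1), A i * (x + q) ^ (n - i) * x ^ i) / s ^ n := by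
      rw [sum_div]
      refine sum_congr rfl fun i hi => ?_
      have hsplit : s ^ n = s ^ (n - i) * s ^ i := by
        rw [← pow_add, Nat.sub_add_cancel (Nat.le_of_lt_succ (mem_range.mp hi))]
      rw [hsplit, show x + 1 + (q - 1) * 1 = x + q by ring, add_sub_cancel_right, div_pow,
        div_pow]
      ring
    rw [hscale, div_eq_iff (pow_ne_zero _ hs)] at h
    simp only [eval_finsetSum, eval_mul, eval_pow, eval_C, eval_X, eval_add, eval_one]
    simp only [mul_one, one_pow] at h
    linear_combination h
  have h := congrArg (coeff · k) hpoly
  rw [coeff_C_mul, coeff_sum_X_add_one_pow, finsetSum_coeff] at h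
  simp only [coeff_mul_X_pow', coeff_C_mul, coeff_X_add_C_pow] at h
  rw [← h, binomialMoment, mul_sum]
  refine sum_congr rfl fun i hi => ?_
  have hi := mem_range.mp hi
  split_ifs with hik
  · rw [show n - i - (k - i) = n - k by omega, ← Nat.choose_symm (by omega : k - i ≤ n - i),
      show n - i - (k - i) = n - k by omega]
    ring
  · rw [Nat.choose_eq_zero_of_lt (by omega : n - i < n - k), Nat.cast_zero, mul_zero, mul_zero]

theorem reflect_of_binomialMoment_eq [CharZero K] {q s : K} {n : ℕ} {A b : ℕ → K}
    (hB : ∀ k, binomialMoment n A k = n.choose k * b (n - k))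
    (hW : ∀ k ≤ n, q ^ (n - k) * binomialMoment n A (n - k) = -s ^ n * binomialMoment n A k)
    {k : ℕ} (hk : k ≤ n) : q ^ (n - k) * b k = -s ^ n * b (n - k) := by
  have h := hW k hk
  rw [hB, hB, Nat.choose_symm hk, Nat.sub_sub_self hk] at h
  have hchoose : (n.choose k : K) ≠ 0 := Nat.cast_ne_zero.mpr (Nat.choose_pos hk).ne'
  exact mul_left_cancel₀ hchoose (by linear_combination h)

section Reflection

variable {q s : K} {n : ℕ} {b : ℕ → K}

theorem secondDiff_reflect (hrefl : ∀ k ≤ n, q ^ (n - k) * b k = -s ^ n * b (n - k))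
    {k : ℕ} (hk : k + 2 ≤ n) :
    s ^ n * secondDiff q b (n - 2 - k) = -q ^ (n - k - 1) * secondDiff q b k := by
  have h0 := hrefl k (by omega)
  have h1 := hrefl (k + 1) (by omega)
  have h2 := hrefl (k + 2) hk
  rw [secondDiff, show n - 2 - k + 2 = n - k by omega, show n - 2 - k + 1 = n - (k + 1) by omega,
    show n - 2 - k = n - (k + 2) by omega, secondDiff]
  have e1 : q ^ (n - k) = q ^ (n - k - 1) * q := by rw [← pow_succ, Nat.sub_add_cancel (by omega)]
  have e2 : q ^ (n - (k + 1)) = q ^ (n - k - 1) := by rw [Nat.sub_succ']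
  have e3 : q ^ (n - (k + 2)) * q = q ^ (n - k - 1) := by
    rw [← pow_succ, show n - (k + 2) + 1 = n - k - 1 by omega]
  rw [e2] at h1
  rw [e1] at h0
  linear_combination h0 - (1 + q) * h1 + q * h2 - b (k + 2) * e3

variable {d : ℕ} {P : K[X]}

theorem coeff_antiReciprocal_of_secondDiff (hq : q ≠ 1) (hs : s ≠ 0) (hsq : s ^ 2 = q)
    (hd : 2 ≤ d) (hdn : 2 * d ≤ n + 2)
    (hdiff : ∀ m, secondDiff q b (m + d - 2) = (q - 1) * P.coeff m)
    (hrefl : ∀ k ≤ n, q ^ (n - k) * b k = -s ^ n * b (n - k))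
    {m : ℕ} (hm : m ≤ n + 2 - 2 * d) :
    s ^ (n + 2 - 2 * d) * P.coeff m = -q ^ m * P.coeff (n + 2 - 2 * d - m) := by
  have h := secondDiff_reflect hrefl (k := n - d - m) (by omega)
  rw [show n - 2 - (n - d - m) = m + d - 2 by omega, hdiff,
    show n - d - m = n + 2 - 2 * d - m + d - 2 by omega, hdiff,
    show n - (n + 2 - 2 * d - m + d - 2) - 1 = (d - 1) + m by omega] at h
  have hsn : s ^ n = s ^ (n + 2 - 2 * d) * q ^ (d - 1) := by
    rw [← hsq, ← pow_mul, ← pow_add]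
    congr 1
    omega
  have hq0 : q ^ (d - 1) * (q - 1) ≠ 0 :=
    mul_ne_zero (pow_ne_zero _ (hsq ▸ pow_ne_zero 2 hs)) (sub_ne_zero.mpr hq)
  refine mul_left_cancel₀ hq0 ?_
  rw [hsn, pow_add] at h
  linear_combination h

theorem natDegree_le_of_secondDiff (hq : q ≠ 1) (hs : s ≠ 0) (hd : 2 ≤ d)
    (hone : ∀ k < d, b k = 1) (hdiff : ∀ m, secondDiff q b (m + d - 2) = (q - 1) * P.coeff m)
    (hrefl : ∀ k ≤ n, q ^ (n - k) * b k = -s ^ n * b (n - k))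
    (hP : P.degree ≤ (n - d : ℕ)) :
    P.natDegree ≤ n + 2 - 2 * d := by
  refine natDegree_le_iff_coeff_eq_zero.mpr fun m hm => ?_
  by_cases hmd : m + d ≤ n
  · have h := secondDiff_reflect hrefl (k := n - d - m) (by omega)
    rw [show n - 2 - (n - d - m) = m + d - 2 by omega, hdiff, secondDiff,
      hone _ (by omega), hone _ (by omega), hone _ (by omega)] at h
    have hne : s ^ n * (q - 1) ≠ 0 := mul_ne_zero (pow_ne_zero _ hs) (sub_ne_zero.mpr hq)
    have hzero : s ^ n * (q - 1) * P.coeff m = 0 := by linear_combination h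
    exact (mul_eq_zero.mp hzero).resolve_left hne
  · exact coeff_eq_zero_of_degree_lt (hP.trans_lt (by exact_mod_cast (by omega : n - d < m)))

end Reflection

theorem two_mul_le_add_one_of_reflect {q s : ℝ} (hq : 0 < q) (hs : 0 < s) {n d : ℕ}
    (hdn : d ≤ n) {b : ℕ → ℂ} (hone : ∀ k < d, b k = 1)
    (hrefl : ∀ k ≤ n, (q : ℂ) ^ (n - k) * b k = -(s : ℂ) ^ n * b (n - k)) :
    2 * d ≤ n + 1 := by
  by_contra! h
  have h' := hrefl (d - 1) (by omega)
  rw [hone _ (by omega), hone _ (by omega), mul_one, mul_one] at h'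
  have h'' : q ^ (n - (d - 1)) = -s ^ n := by exact_mod_cast h'
  linarith [pow_pos hq (n - (d - 1)), pow_pos hs n]

section FunctionalEquation

variable {q s : K} {G : ℕ} {P : K[X]}

theorem degree_eq_of_coeff_antiReciprocal (hs : s ≠ 0) (hsq : s ^ 2 = q)
    (hdeg : P.natDegree ≤ G)
    (hsym : ∀ m ≤ G, s ^ G * P.coeff m = -q ^ m * P.coeff (G - m)) (h0 : P.coeff 0 ≠ 0) :
    P.degree = G := by
  refine degree_eq_of_le_of_coeff_ne_zero (degree_le_of_natDegree_le hdeg) fun hG => ?_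
  have h := hsym G le_rfl
  rw [hG, mul_zero, Nat.sub_self, neg_mul, zero_eq_neg] at h
  exact mul_ne_zero (pow_ne_zero _ (hsq ▸ pow_ne_zero 2 hs)) h0 h

theorem eval_eq_of_coeff_antiReciprocal (hs : s ≠ 0) (hsq : s ^ 2 = q)
    (hdeg : P.natDegree ≤ G)
    (hsym : ∀ m ≤ G, s ^ G * P.coeff m = -q ^ m * P.coeff (G - m)) {T : K} (hT : T ≠ 0) :
    P.eval T = -P.eval (1 / (q * T)) * s ^ G * T ^ G := by
  have hq : q ≠ 0 := hsq ▸ pow_ne_zero 2 hs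
  rw [eval_eq_sum_range' (Nat.lt_succ_of_le hdeg), eval_eq_sum_range' (Nat.lt_succ_of_le hdeg),
    ← sum_range_reflect (fun m => P.coeff m * T ^ m), neg_mul, neg_mul, sum_mul, sum_mul,
    ← sum_neg_distrib]
  refine sum_congr rfl fun m hm => ?_
  have hm := Nat.le_of_lt_succ (mem_range.mp hm)
  have hTG : T ^ G = T ^ (G - m) * T ^ m := by rw [← pow_add, Nat.sub_add_cancel hm]
  rw [show G + 1 - 1 - m = G - m by omega, hTG]
  have hinv : (1 / (q * T)) ^ m * (q ^ m * T ^ m) = 1 := by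
    rw [← mul_pow, ← mul_pow, one_div_mul_cancel (mul_ne_zero hq hT), one_pow]
  linear_combination (1 / (q * T)) ^ m * T ^ (G - m) * T ^ m * hsym m hm -
    P.coeff (G - m) * T ^ (G - m) * hinv

end FunctionalEquation

/-- Theorem 4.2 (Functional equation).  Let `W(x,y) = x^n + ∑_{i=d}^n A_i x^{n-i} y^i`
(encoded via coefficients `A 0 = 1`, `A i = 0` for `0 < i < d`, `A d ≠ 0`) with
`n ≥ d ≥ 2`, satisfying `W^{σ_q} = -W`, and let `P` be its zeta polynomial
(the unique polynomial of degree ≤ `n-d` with the defining coefficient property).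
Then `P` has degree exactly `2g = n + 2 - 2d` and satisfies
`P(T) = -P(1/(qT)) q^g T^{2g}` (with `q^g = (√q)^{2g}`) for all `T ≠ 0`. -/
theorem zeta_functional_equation (q : ℝ) (hq0 : 0 < q) (hq1 : q ≠ 1)
    (n d : ℕ) (hd2 : 2 ≤ d) (hdn : d ≤ n) (A : ℕ → ℂ)
    (hA0 : A 0 = 1) (hAz : ∀ i, 0 < i → i < d → A i = 0) (hAd : A d ≠ 0)
    (hanti : ∀ x y : ℂ,
      (∑ i ∈ Finset.range (n + 1),
        A i * ((x + ((q : ℂ) - 1) * y) / (Real.sqrt q : ℂ)) ^ (n - i) *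
          ((x - y) / (Real.sqrt q : ℂ)) ^ i)
        = -∑ i ∈ Finset.range (n + 1), A i * x ^ (n - i) * y ^ i)
    (P : Polynomial ℂ) (hPdeg : P.degree ≤ (n - d : ℕ))
    (hP : ∀ x y : ℂ,
      (∑ m ∈ Finset.range (n - d + 1), ∑ k ∈ Finset.range (n - d - m + 1),
          P.coeff m * (n.choose k : ℂ) * y ^ (n - k) * (x - y) ^ k *
            ∑ j ∈ Finset.range (n - d - m - k + 1), (q : ℂ) ^ j)
        = ((∑ i ∈ Finset.range (n + 1), A i * x ^ (n - i) * y ^ i) - x ^ n) /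
            ((q : ℂ) - 1)) :
    P.degree = (n + 2 - 2 * d : ℕ) ∧
      ∀ T : ℂ, T ≠ 0 →
        P.eval T = -P.eval (1 / ((q : ℂ) * T)) *
          (Real.sqrt q : ℂ) ^ (n + 2 - 2 * d) * T ^ (n + 2 - 2 * d) := by
  have hq1' : (q : ℂ) ≠ 1 := by exact_mod_cast hq1
  have hs : 0 < Real.sqrt q := Real.sqrt_pos.mpr hq0
  have hs0 : (Real.sqrt q : ℂ) ≠ 0 := by exact_mod_cast hs.ne'
  have hsq : (Real.sqrt q : ℂ) ^ 2 = q := by exact_mod_cast Real.sq_sqrt hq0.le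
  have hB := binomialMoment_eq_choose_mul_zetaMoment hq1' hdn A P hP
  have hrefl : ∀ k ≤ n, (q : ℂ) ^ (n - k) * zetaMoment (q : ℂ) d P k =
      -(Real.sqrt q : ℂ) ^ n * zetaMoment (q : ℂ) d P (n - k) :=
    fun k => reflect_of_binomialMoment_eq hB fun _ => binomialMoment_reflect hs0 A hanti
  have hone : ∀ k < d, zetaMoment (q : ℂ) d P k = 1 := fun _ => zetaMoment_of_lt _ P
  have hdiff := secondDiff_zetaMoment (q : ℂ) hd2 P
  have hG := two_mul_le_add_one_of_reflect hq0 hs hdn hone hrefl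
  have hdeg := natDegree_le_of_secondDiff hq1' hs0 hd2 hone hdiff hrefl hPdeg
  have hsym := fun m (hm : m ≤ n + 2 - 2 * d) =>
    coeff_antiReciprocal_of_secondDiff hq1' hs0 hsq hd2 (by omega) hdiff hrefl hm
  have hP0 : P.coeff 0 ≠ 0 := by
    intro h0
    have h := hB (n - d)
    rw [binomialMoment_sub_self (by omega) hdn hA0 hAz, Nat.sub_sub_self hdn, zetaMoment_self, h0,
      Nat.choose_symm hdn] at h
    exact hAd (by linear_combination h)
  exact ⟨degree_eq_of_coeff_antiReciprocal hs0 hsq hdeg hsym hP0,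
    fun T => eval_eq_of_coeff_antiReciprocal hs0 hsq hdeg hsym⟩
end

section
/- Let q be a real number with q > 0 and q ≠ 1, let n ≥ d ≥ 2 be integers, and let W(x,y) = x^n + Σ_{i=d}^{n} A_i x^{n-i} y^i be a homogeneous polynomial with complex coefficients, A_d ≠ 0, satisfying W((x+(q-1)y)/√q, (x-y)/√q) = -W(x,y) identically. Then d ≤ n/2 + 1, i.e., 2d ≤ n + 2. -/
/-!
Put `c = √q` and substitute `x = 1 + c z`, `y = 1`: since `c² = q`, the transformed arguments become
`z + c` and `z`, so `W^{σ_q} = -W` turns into the one-variable polynomial identity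
`∑ A_i (z + c)^{n-i} z^i = -∑ A_i (1 + c z)^{n-i}`.
If `2d > n + 2`, then `k = d - 1` satisfies `n - d < k < d`, so in the coefficient of `z^k` only the
term `i = 0` survives on either side, giving `c^{n-k} binom(n,k) = -c^k binom(n,k)`, impossible for
`c > 0`.
-/

open Polynomial Finset

namespace Polynomial

variable {R : Type*} [CommRing R]

theorem coeff_one_add_C_mul_X_pow (a : R) (m k : ℕ) :
    ((1 + C a * X) ^ m).coeff k = a ^ k * m.choose k := by
  have hcomp : (1 + C a * X) ^ m = ((1 + X) ^ m).comp (C a * X) := by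
    simp only [pow_comp, add_comp, one_comp, X_comp]
  rw [hcomp, comp_C_mul_X_coeff, coeff_one_add_X_pow, mul_comm]

variable {A : ℕ → R} {n d k : ℕ}

theorem coeff_sum_C_mul_X_add_C_pow_mul_X_pow (hA0 : A 0 = 1)
    (hA : ∀ i, 0 < i → i < d → A i = 0) (hkd : k < d) (a : R) :
    (∑ i ∈ range (n + 1), C (A i) * (X + C a) ^ (n - i) * X ^ i).coeff k
      = a ^ (n - k) * n.choose k := by
  rw [finsetSum_coeff, sum_eq_single_of_mem 0 (by simp)]
  · simp [hA0, coeff_X_add_C_pow]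
  · intro i _ hi0
    rcases lt_or_ge i d with hid | hdi
    · simp [hA i (Nat.pos_of_ne_zero hi0) hid]
    · rw [coeff_mul_X_pow', if_neg (by omega)]

theorem coeff_sum_C_mul_one_add_C_mul_X_pow (hA0 : A 0 = 1)
    (hA : ∀ i, 0 < i → i < d → A i = 0) (hk : n - d < k) (a : R) :
    (∑ i ∈ range (n + 1), C (A i) * (1 + C a * X) ^ (n - i)).coeff k
      = a ^ k * n.choose k := by
  rw [finsetSum_coeff, sum_eq_single_of_mem 0 (by simp)]
  · simp [hA0, coeff_one_add_C_mul_X_pow]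
  · intro i _ hi0
    rcases lt_or_ge i d with hid | hdi
    · simp [hA i (Nat.pos_of_ne_zero hi0) hid]
    · simp [coeff_one_add_C_mul_X_pow, Nat.choose_eq_zero_of_lt (show n - i < k by omega)]

end Polynomial

theorem sum_X_add_C_pow_mul_X_pow_eq_neg_sum_one_add_C_mul_X_pow {K : Type*} [Field K]
    [Infinite K] (A : ℕ → K) (n : ℕ) {c : K} (hc : c ≠ 0)
    (hanti : ∀ x y : K,
      ∑ i ∈ range (n + 1), A i * ((x + (c ^ 2 - 1) * y) / c) ^ (n - i) * ((x - y) / c) ^ i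
        = -∑ i ∈ range (n + 1), A i * x ^ (n - i) * y ^ i) :
    ∑ i ∈ range (n + 1), C (A i) * (X + C c) ^ (n - i) * X ^ i
      = -∑ i ∈ range (n + 1), C (A i) * (1 + C c * X) ^ (n - i) := by
  refine Polynomial.funext fun z => ?_
  have hx : (1 + c * z + (c ^ 2 - 1) * 1) / c = z + c := by field_simp; ring
  have hy : (1 + c * z - 1) / c = z := by field_simp; ring
  have hz := hanti (1 + c * z) 1
  rw [hx, hy] at hz
  simpa [eval_finsetSum] using hz

theorem fwe_d_le_half_n_add_one_general (q : ℝ) (hq0 : 0 < q)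
    (n d : ℕ) (hdn : d ≤ n) (A : ℕ → ℂ)
    (hA0 : A 0 = 1) (hAz : ∀ i, 0 < i → i < d → A i = 0)
    (hanti : ∀ x y : ℂ,
      (∑ i ∈ Finset.range (n + 1),
        A i * ((x + ((q : ℂ) - 1) * y) / (Real.sqrt q : ℂ)) ^ (n - i) *
          ((x - y) / (Real.sqrt q : ℂ)) ^ i)
        = -∑ i ∈ Finset.range (n + 1), A i * x ^ (n - i) * y ^ i) :
    2 * d ≤ n + 2 := by
  by_contra! hnd
  set c : ℝ := Real.sqrt q
  have hc : 0 < c := Real.sqrt_pos.mpr hq0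
  have hcq : (c : ℂ) ^ 2 = q := by exact_mod_cast Real.sq_sqrt hq0.le
  rw [← hcq] at hanti
  have hpoly := sum_X_add_C_pow_mul_X_pow_eq_neg_sum_one_add_C_mul_X_pow A n
    (by exact_mod_cast hc.ne') hanti
  have hcoeff := congrArg (coeff · (d - 1)) hpoly
  simp only [coeff_neg, coeff_sum_C_mul_X_add_C_pow_mul_X_pow hA0 hAz (by omega : d - 1 < d),
    coeff_sum_C_mul_one_add_C_mul_X_pow hA0 hAz (by omega : n - d < d - 1)] at hcoeff
  have hreal : c ^ (n - (d - 1)) * n.choose (d - 1) = -(c ^ (d - 1) * n.choose (d - 1)) := by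
    exact_mod_cast hcoeff
  have hchoose : 0 < n.choose (d - 1) := Nat.choose_pos (by omega)
  have : 0 < c ^ (n - (d - 1)) * n.choose (d - 1) + c ^ (d - 1) * n.choose (d - 1) := by
    positivity
  linarith

/-- Inequality (14): for a formal weight enumerator
`W(x,y) = x^n + ∑_{i=d}^n A_i x^{n-i} y^i` (encoded via coefficients
`A 0 = 1`, `A i = 0` for `0 < i < d`, `A d ≠ 0`) with `n ≥ d ≥ 2` and
`W^{σ_q} = -W`, one has `d ≤ n/2 + 1`, i.e. `2d ≤ n + 2`. -/
theorem fwe_d_le_half_n_add_one (q : ℝ) (hq0 : 0 < q) (hq1 : q ≠ 1)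
    (n d : ℕ) (hd2 : 2 ≤ d) (hdn : d ≤ n) (A : ℕ → ℂ)
    (hA0 : A 0 = 1) (hAz : ∀ i, 0 < i → i < d → A i = 0) (hAd : A d ≠ 0)
    (hanti : ∀ x y : ℂ,
      (∑ i ∈ Finset.range (n + 1),
        A i * ((x + ((q : ℂ) - 1) * y) / (Real.sqrt q : ℂ)) ^ (n - i) *
          ((x - y) / (Real.sqrt q : ℂ)) ^ i)
        = -∑ i ∈ Finset.range (n + 1), A i * x ^ (n - i) * y ^ i) :
    2 * d ≤ n + 2 :=
  fwe_d_le_half_n_add_one_general q hq0 n d hdn A hA0 hAz hanti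
end

section
/- Let W(x,y) be a homogeneous polynomial of degree n belonging to the subalgebra of ℂ[x,y] generated by W_H8(x,y) = x^8 + 14 x^4 y^4 + y^8 and W_12(x,y) = x^{12} - 33 x^8 y^4 - 33 x^4 y^8 + y^{12}, of the form W(x,y) = x^n + Σ_{i=d}^{n} A_i x^{n-i} y^i with A_d ≠ 0, and satisfying W((x+y)/√2, (x-y)/√2) = -W(x,y) identically. Then d ≤ 4⌊(n-12)/24⌋ + 4, where ⌊x⌋ is the greatest integer not exceeding x. -/
/-!
The MacWilliams transform fixes `W_H8` and negates `W_12`, so an anti-invariant `W` is a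
combination of monomials `W_H8^a W_12^b` with `b` odd; homogeneity of degree `n = 12 + 8E`
leaves `b = 2s + 1`, `a = E - 3s` with `s ≤ J := ⌊E/3⌋`. At `x = 1`, in the variable `u = y⁴`,
`W` becomes a combination of `h^(E-3s) q^(2s+1)` with `h = 1 + 14u + u²` and
`q = 1 - 33u - 33u² + u³`.

After multiplication by `h^(2-r) (1-u)^-(4J+5)`, `r = E mod 3`, each of these terms has vanishing
coefficient of `u^(J+1)`: for `s = 0` because `q h^(3k+2) (1-u)^-(4k+5)` is the image of
`h^(3k+3) (1-u)^-(4k+4)` under `1 - (k+1)⁻¹ u d/du`, and `q² = h³ - 108u(1-u)⁴` lowers `s`.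
If `W = x^n + O(y^(4J+5))`, that coefficient would instead be the coefficient of `u^(J+1)` in
`h^(2-r) (1-u)^-(4J+5)`, which is positive.
-/

/-- The weight enumerator of the extended Hamming code,
`W_{H₈}(x,y) = x⁸ + 14x⁴y⁴ + y⁸`, as a two-variable polynomial function. -/
def WH8 : ℂ → ℂ → ℂ := fun x y => x ^ 8 + 14 * x ^ 4 * y ^ 4 + y ^ 8

/-- Ozeki's formal weight enumerator
`W₁₂(x,y) = x¹² - 33x⁸y⁴ - 33x⁴y⁸ + y¹²`, as a two-variable polynomial function. -/
def W12 : ℂ → ℂ → ℂ := fun x y =>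
  x ^ 12 - 33 * x ^ 8 * y ^ 4 - 33 * x ^ 4 * y ^ 8 + y ^ 12

open scoped Polynomial

theorem Algebra.exists_sum_smul_pow_mul_pow_of_mem_adjoin_pair {R A : Type*} [CommSemiring R]
    [CommSemiring A] [Algebra R A] {a b x : A} (hx : x ∈ Algebra.adjoin R {a, b}) :
    ∃ (N : ℕ) (c : Fin N → R) (e : Fin N → ℕ × ℕ), x = ∑ i, c i • (a ^ (e i).1 * b ^ (e i).2) := by
  have hspan := (Subalgebra.mem_toSubmodule _).mpr hx
  rw [Algebra.adjoin_eq_span, Submodule.mem_span_set'] at hspan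
  obtain ⟨N, c, g, rfl⟩ := hspan
  choose α β hg using fun i => (Submonoid.mem_closure_pair a b (g i)).mp (g i).2
  exact ⟨N, c, fun i => (α i, β i), by simp only [hg]⟩

theorem Finset.sum_filter_eq_of_forall_sum_mul_pow_eq {R ι : Type*} [CommRing R] [IsDomain R]
    [Infinite R] (s : Finset ι) (e : ι → R) (D : ι → ℕ) (q : R) (n : ℕ)
    (h : ∀ l : R, ∑ i ∈ s, e i * l ^ D i = q * l ^ n) : ∑ i ∈ s with D i = n, e i = q := by
  have hpoly : ∑ i ∈ s, Polynomial.C (e i) * Polynomial.X ^ D i =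
      Polynomial.C q * Polynomial.X ^ n :=
    Polynomial.funext fun l => by simpa [Polynomial.eval_finsetSum] using h l
  have := congrArg (Polynomial.coeff · n) hpoly
  simpa [Polynomial.finsetSum_coeff, Polynomial.coeff_C_mul_X_pow, Finset.sum_filter, eq_comm]
    using this

theorem Finset.sum_eq_sum_filter_odd {R ι : Type*} [CommRing R] [NoZeroDivisors R]
    [NeZero (2 : R)] (s : Finset ι) (f : ι → R) (β : ι → ℕ)
    (h : ∑ i ∈ s, (-1) ^ β i * f i = -∑ i ∈ s, f i) :
    ∑ i ∈ s, f i = ∑ i ∈ s with Odd (β i), f i := by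
  have hodd : ∑ i ∈ s with Odd (β i), (-1) ^ β i * f i = -∑ i ∈ s with Odd (β i), f i := by
    rw [← Finset.sum_neg_distrib]
    exact Finset.sum_congr rfl fun i hi => by
      rw [(Finset.mem_filter.mp hi).2.neg_one_pow, neg_one_mul]
  have heven : ∑ i ∈ s with ¬ Odd (β i), (-1) ^ β i * f i = ∑ i ∈ s with ¬ Odd (β i), f i :=
    Finset.sum_congr rfl fun i hi => by
      rw [(Nat.not_odd_iff_even.mp (Finset.mem_filter.mp hi).2).neg_one_pow, one_mul]
  rw [← Finset.sum_filter_add_sum_filter_not s (fun i => Odd (β i)), hodd, heven] at h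
  rw [← Finset.sum_filter_add_sum_filter_not s (fun i => Odd (β i)) f] at h ⊢
  have h2 : 2 * ∑ i ∈ s with ¬ Odd (β i), f i = 0 := by linear_combination h
  rw [(mul_eq_zero.mp h2).resolve_left two_ne_zero, add_zero]

theorem Polynomial.X_pow_dvd_sub_one_of_eq_expand {R : Type*} [CommRing R] {P G : R[X]}
    {p m d : ℕ} (hp : 0 < p) (hPG : P = expand R p G) (h0 : P.coeff 0 = 1)
    (hz : ∀ j, 0 < j → j < d → P.coeff j = 0) (hm : p * m < d) : X ^ (m + 1) ∣ G - 1 := by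
  rw [X_pow_dvd_iff]
  intro j hj
  rw [coeff_sub, coeff_one, ← coeff_expand_mul hp, ← hPG]
  rcases Nat.eq_zero_or_pos j with rfl | hj0
  · rw [zero_mul, h0, if_pos rfl, sub_self]
  · rw [hz _ (by positivity) (by nlinarith), if_neg hj0.ne', sub_zero]

noncomputable def hammingPoly (R : Type*) [CommSemiring R] : R[X] :=
  1 + 14 * Polynomial.X + Polynomial.X ^ 2

noncomputable def ozekiPoly (R : Type*) [CommRing R] : R[X] :=
  1 - 33 * Polynomial.X - 33 * Polynomial.X ^ 2 + Polynomial.X ^ 3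

section Identities
open Polynomial
variable (R : Type*) [CommRing R]

theorem ozekiPoly_eq_hammingPoly :
    ozekiPoly R = (1 - X) * (hammingPoly R - 3 * X * derivative (hammingPoly R))
      - 4 * X * hammingPoly R := by
  simp only [ozekiPoly, hammingPoly, derivative_add, derivative_one, derivative_mul,
    derivative_ofNat, derivative_X, derivative_X_pow, Nat.cast_ofNat, map_ofNat]
  ring

theorem ozekiPoly_sq : ozekiPoly R ^ 2 = hammingPoly R ^ 3 - 108 * X * (1 - X) ^ 4 := by
  simp only [ozekiPoly, hammingPoly]
  ring

end Identities

namespace PowerSeries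

theorem coeff_X_mul_derivative {R : Type*} [CommSemiring R] (f : R⟦X⟧) (n : ℕ) :
    coeff n (X * d⁄dX R f) = n * coeff n f := by
  cases n with
  | zero => simp
  | succ n => rw [coeff_succ_X_mul, coeff_derivative]; push_cast; ring

theorem derivative_mk_one {R : Type*} [CommRing R] : d⁄dX R (mk 1) = mk 1 ^ 2 := by
  have h := congrArg (d⁄dX R) (mk_one_mul_one_sub_eq_one (S := R))
  simp only [Derivation.leibniz, map_sub, Derivation.map_one_eq_zero, derivative_X,
    smul_eq_mul] at h
  linear_combination (mk 1 : R⟦X⟧) * h - d⁄dX R (mk 1) * mk_one_mul_one_sub_eq_one (S := R)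

theorem coeff_mul_le_coeff_add_mul {R : Type*} [CommSemiring R] [PartialOrder R]
    [CanonicallyOrderedAdd R] (f g : R⟦X⟧) (a b : ℕ) :
    coeff a f * coeff b g ≤ coeff (a + b) (f * g) := by
  rw [coeff_mul]
  exact Finset.single_le_sum (f := fun p : ℕ × ℕ => coeff p.1 f * coeff p.2 g)
    (fun _ _ => zero_le) (a := (a, b)) (Finset.HasAntidiagonal.mem_antidiagonal.mpr rfl)

end PowerSeries

section Series
open PowerSeries

theorem coe_hammingPoly {R : Type*} [CommSemiring R] :
    (hammingPoly R : R⟦X⟧) = 1 + 14 * X + X ^ 2 := by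
  rw [hammingPoly, ← Polynomial.coeToPowerSeries.ringHom_apply]
  simp only [map_add, map_mul, map_pow, map_one, map_ofNat,
    Polynomial.coeToPowerSeries.ringHom_apply, Polynomial.coe_X]

variable {R : Type*} [CommRing R]

local notation "𝐇" => ((hammingPoly R : R[X]) : R⟦X⟧)
local notation "𝐐" => ((ozekiPoly R : R[X]) : R⟦X⟧)

theorem natCast_succ_mul_ozeki_mul_eq_sub_X_mul_derivative (k : ℕ) :
    ((k + 1 : ℕ) : R⟦X⟧) * (𝐐 * 𝐇 ^ (3 * k + 2) * mk 1 ^ (4 * k + 5)) =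
      ((k + 1 : ℕ) : R⟦X⟧) * (𝐇 ^ (3 * k + 3) * mk 1 ^ (4 * k + 4))
        - X * d⁄dX R (𝐇 ^ (3 * k + 3) * mk 1 ^ (4 * k + 4)) := by
  have hQ := congrArg Polynomial.coeToPowerSeries.ringHom (ozekiPoly_eq_hammingPoly R)
  simp only [map_sub, map_mul, map_one, map_ofNat, Polynomial.coeToPowerSeries.ringHom_apply,
    Polynomial.coe_X, ← derivative_coe] at hQ
  rw [Derivation.leibniz, Derivation.leibniz_pow, Derivation.leibniz_pow, derivative_mk_one,
    show 3 * k + 3 - 1 = 3 * k + 2 by omega, show 4 * k + 4 - 1 = 4 * k + 3 by omega, hQ]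
  simp only [smul_eq_mul, nsmul_eq_mul]
  push_cast
  linear_combination ((k : R⟦X⟧) + 1) * 𝐇 ^ (3 * k + 2) * mk 1 ^ (4 * k + 4)
    * (𝐇 - 3 * X * d⁄dX R 𝐇) * mk_one_mul_one_sub_eq_one (S := R)

theorem coeff_ozeki_mul_hamming_pow_mul_mk_one_pow_eq_zero [IsDomain R] [CharZero R] (k : ℕ) :
    coeff (k + 1) (𝐐 * 𝐇 ^ (3 * k + 2) * mk 1 ^ (4 * k + 5)) = 0 := by
  have h := congrArg (coeff (k + 1))
    (natCast_succ_mul_ozeki_mul_eq_sub_X_mul_derivative (R := R) k)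
  rw [← map_natCast (C (R := R)), coeff_C_mul, map_sub, coeff_C_mul, coeff_X_mul_derivative,
    sub_self] at h
  exact (mul_eq_zero.mp h).resolve_left (Nat.cast_ne_zero.mpr k.succ_ne_zero)

theorem coeff_ozeki_pow_mul_hamming_pow_mul_mk_one_pow_eq_zero [IsDomain R] [CharZero R]
    (s k : ℕ) :
    coeff (s + k + 1) (𝐐 ^ (2 * s + 1) * 𝐇 ^ (3 * k + 2) * mk 1 ^ (4 * (s + k) + 5)) = 0 := by
  induction s generalizing k with
  | zero => simpa using coeff_ozeki_mul_hamming_pow_mul_mk_one_pow_eq_zero k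
  | succ s ih =>
    have hsq := congrArg Polynomial.coeToPowerSeries.ringHom (ozekiPoly_sq R)
    simp only [map_sub, map_mul, map_pow, map_one, map_ofNat,
      Polynomial.coeToPowerSeries.ringHom_apply, Polynomial.coe_X] at hsq
    have hB : ((1 : R⟦X⟧) - X) ^ 4 * mk 1 ^ 4 = 1 := by
      rw [← mul_pow, mul_comm, mk_one_mul_one_sub_eq_one, one_pow]
    have hsplit : 𝐐 ^ (2 * (s + 1) + 1) * 𝐇 ^ (3 * k + 2) * mk 1 ^ (4 * (s + 1 + k) + 5) =
        𝐐 ^ (2 * s + 1) * 𝐇 ^ (3 * (k + 1) + 2) * mk 1 ^ (4 * (s + (k + 1)) + 5)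
          - X * (108 * (𝐐 ^ (2 * s + 1) * 𝐇 ^ (3 * k + 2) * mk 1 ^ (4 * (s + k) + 5))) := by
      rw [show 2 * (s + 1) + 1 = 2 * s + 1 + 2 by ring, pow_add, hsq]
      linear_combination (-108 * X * 𝐐 ^ (2 * s + 1) * 𝐇 ^ (3 * k + 2) *
        mk 1 ^ (4 * (s + k) + 5)) * hB
    rw [hsplit, map_sub, show s + 1 + k + 1 = s + (k + 1) + 1 by ring, ih, coeff_succ_X_mul,
      ← map_ofNat (C (R := R)), coeff_C_mul, ← add_assoc, ih, mul_zero, sub_zero]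

theorem coeff_hamming_pow_mul_mk_one_pow_ne_zero [CharZero R] (e m j : ℕ) :
    coeff j (𝐇 ^ e * mk 1 ^ (m + 1)) ≠ 0 := by
  have hmap : map (Nat.castRingHom R) ((hammingPoly ℕ : ℕ⟦X⟧) ^ e * mk 1 ^ (m + 1)) =
      𝐇 ^ e * mk 1 ^ (m + 1) := by
    have hmk : map (Nat.castRingHom R) (mk 1) = mk 1 := by ext; simp
    simp [coe_hammingPoly, hmk, map_ofNat]
  have hpos : 1 ≤ coeff j ((hammingPoly ℕ : ℕ⟦X⟧) ^ e * mk 1 ^ (m + 1)) :=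
    calc 1 = coeff j (mk 1) * coeff 0 ((hammingPoly ℕ : ℕ⟦X⟧) ^ e * mk 1 ^ m) := by
          simp [coe_hammingPoly]
      _ ≤ coeff (j + 0) (mk 1 * ((hammingPoly ℕ : ℕ⟦X⟧) ^ e * mk 1 ^ m)) :=
          coeff_mul_le_coeff_add_mul _ _ _ _
      _ = _ := by ring_nf
  rw [← hmap, coeff_map, Nat.coe_castRingHom, Nat.cast_ne_zero]
  omega

theorem not_X_pow_dvd_sum_sub_one [IsDomain R] [CharZero R] {ι : Type*} (F : Finset ι)
    (c : ι → R) (s : ι → ℕ) {J r : ℕ} (hr : r ≤ 2) (hs : ∀ i ∈ F, s i ≤ J) :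
    ¬ Polynomial.X ^ (J + 2) ∣ ∑ i ∈ F, Polynomial.C (c i) * hammingPoly R ^ (3 * (J - s i) + r)
      * ozekiPoly R ^ (2 * s i + 1) - 1 := by
  rintro ⟨g, hg⟩
  have hdiv := congrArg
    (fun p => Polynomial.coeToPowerSeries.ringHom p * (𝐇 ^ (2 - r) * mk 1 ^ (4 * J + 5))) hg
  simp only [map_sub, map_sum, map_mul, map_pow, map_one,
    Polynomial.coeToPowerSeries.ringHom_apply, Polynomial.coe_C, Polynomial.coe_X] at hdiv
  have hterm : ∀ i ∈ F, coeff (J + 1) (C (c i) * 𝐇 ^ (3 * (J - s i) + r)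
      * 𝐐 ^ (2 * s i + 1) * (𝐇 ^ (2 - r) * mk 1 ^ (4 * J + 5))) = 0 := by
    intro i hi
    obtain ⟨k, rfl⟩ : ∃ k, J = s i + k := ⟨J - s i, by have := hs i hi; omega⟩
    have h := coeff_ozeki_pow_mul_hamming_pow_mul_mk_one_pow_eq_zero (R := R) (s i) k
    rw [show 3 * k + 2 = 3 * k + r + (2 - r) by omega, pow_add] at h
    rw [show s i + k - s i = k by omega, ← mul_zero (c i), ← h, ← coeff_C_mul]
    congr 1
    ring
  have hcoeff := congrArg (coeff (J + 1)) hdiv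
  rw [sub_mul, map_sub, Finset.sum_mul, map_sum, Finset.sum_eq_zero hterm, one_mul, zero_sub,
    mul_assoc, coeff_X_pow_mul', if_neg (by omega), neg_eq_zero] at hcoeff
  exact coeff_hamming_pow_mul_mk_one_pow_ne_zero (2 - r) (4 * J + 4) (J + 1) hcoeff

end Series

theorem WH8_macWilliams {s : ℂ} (hs : s ^ 2 = 2) (x y : ℂ) :
    WH8 ((x + y) / s) ((x - y) / s) = WH8 x y := by
  simp only [WH8, div_pow, show s ^ 8 = (s ^ 2) ^ 4 by ring, show s ^ 4 = (s ^ 2) ^ 2 by ring, hs]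
  field_simp
  ring
theorem W12_macWilliams {s : ℂ} (hs : s ^ 2 = 2) (x y : ℂ) :
    W12 ((x + y) / s) ((x - y) / s) = -W12 x y := by
  simp only [W12, div_pow, show s ^ 12 = (s ^ 2) ^ 6 by ring, show s ^ 8 = (s ^ 2) ^ 4 by ring,
    show s ^ 4 = (s ^ 2) ^ 2 by ring, hs]
  field_simp
  ring

theorem WH8_mul_right (l t : ℂ) : WH8 l (l * t) = l ^ 8 * (hammingPoly ℂ).eval (t ^ 4) := by
  simp only [WH8, hammingPoly, Polynomial.eval_add, Polynomial.eval_mul, Polynomial.eval_pow,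
    Polynomial.eval_one, Polynomial.eval_X, Polynomial.eval_ofNat]
  ring

theorem W12_mul_right (l t : ℂ) : W12 l (l * t) = l ^ 12 * (ozekiPoly ℂ).eval (t ^ 4) := by
  simp only [W12, ozekiPoly, Polynomial.eval_add, Polynomial.eval_sub, Polynomial.eval_mul,
    Polynomial.eval_pow, Polynomial.eval_one, Polynomial.eval_X, Polynomial.eval_ofNat]
  ring

theorem exists_eval_one_eq_sum_odd {W : ℂ → ℂ → ℂ} {n : ℕ}
    (hWmem : W ∈ Algebra.adjoin ℂ ({WH8, W12} : Set (ℂ → ℂ → ℂ)))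
    (hanti : ∀ x y : ℂ,
      W ((x + y) / (Real.sqrt 2 : ℂ)) ((x - y) / (Real.sqrt 2 : ℂ)) = -W x y)
    (hhom : ∀ l t : ℂ, W l (l * t) = l ^ n * W 1 t) :
    ∃ (N : ℕ) (c : Fin N → ℂ) (e : Fin N → ℕ × ℕ), ∀ t : ℂ,
      W 1 t = ∑ i with Odd (e i).2 ∧ 8 * (e i).1 + 12 * (e i).2 = n,
        c i * (hammingPoly ℂ).eval (t ^ 4) ^ (e i).1 * (ozekiPoly ℂ).eval (t ^ 4) ^ (e i).2 := by
  obtain ⟨N, c, e, rfl⟩ := Algebra.exists_sum_smul_pow_mul_pow_of_mem_adjoin_pair hWmem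
  have hs : ((Real.sqrt 2 : ℝ) : ℂ) ^ 2 = 2 := by
    rw [← Complex.ofReal_pow, Real.sq_sqrt zero_le_two]; norm_num
  have hpt : ∀ x y, (∑ i, c i • (WH8 ^ (e i).1 * W12 ^ (e i).2)) x y =
      ∑ i, c i * WH8 x y ^ (e i).1 * W12 x y ^ (e i).2 := by
    intro x y
    simp [Finset.sum_apply, mul_assoc]
  have hodd : ∀ x y, (∑ i, c i • (WH8 ^ (e i).1 * W12 ^ (e i).2)) x y =
      ∑ i with Odd (e i).2, c i * WH8 x y ^ (e i).1 * W12 x y ^ (e i).2 := by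
    intro x y
    rw [hpt]
    refine Finset.sum_eq_sum_filter_odd _ _ _ ?_
    rw [← hpt, ← hanti, hpt]
    refine Finset.sum_congr rfl fun i _ => ?_
    rw [WH8_macWilliams hs, W12_macWilliams hs, neg_pow]
    ring
  refine ⟨N, c, e, fun t => ?_⟩
  rw [← Finset.filter_filter]
  refine (Finset.sum_filter_eq_of_forall_sum_mul_pow_eq _ _ _ _ n fun l => ?_).symm
  rw [mul_comm, ← hhom, hodd]
  refine Finset.sum_congr rfl fun i _ => ?_
  rw [WH8_mul_right, W12_mul_right]
  ring

theorem floor_natCast_sub_twelve_div (E : ℕ) :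
    ⌊(((12 + 8 * E : ℕ) : ℚ) - 12) / 24⌋ = (E / 3 : ℕ) := by
  push_cast
  rw [show (12 + 8 * (E : ℚ) - 12) / 24 = (E : ℚ) / (3 : ℕ) by push_cast; ring]
  exact Rat.floor_natCast_div_natCast E 3

theorem le_floor_of_eq_expand_sum {R ι : Type*} [CommRing R] [IsDomain R] [CharZero R]
    (F : Finset ι) (c : ι → R) (α β : ι → ℕ) {n d : ℕ}
    (hF : ∀ i ∈ F, Odd (β i) ∧ 8 * α i + 12 * β i = n) (P : R[X]) (h0 : P.coeff 0 = 1)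
    (hz : ∀ j, 0 < j → j < d → P.coeff j = 0)
    (hPG : P = Polynomial.expand R 4
      (∑ i ∈ F, Polynomial.C (c i) * hammingPoly R ^ α i * ozekiPoly R ^ β i)) :
    (d : ℤ) ≤ 4 * ⌊((n : ℚ) - 12) / 24⌋ + 4 := by
  obtain ⟨i₀, hi₀⟩ : F.Nonempty := by
    rw [Finset.nonempty_iff_ne_empty]
    rintro rfl
    simp [hPG] at h0
  obtain ⟨E, rfl⟩ : ∃ E, n = 12 + 8 * E := by
    obtain ⟨⟨s, hs⟩, hn⟩ := hF i₀ hi₀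
    exact ⟨α i₀ + 3 * s, by omega⟩
  rw [floor_natCast_sub_twelve_div]
  by_contra! hlt
  have hdvd := Polynomial.X_pow_dvd_sub_one_of_eq_expand (m := E / 3 + 1) four_pos hPG h0 hz
    (by omega)
  have hexp : ∀ i ∈ F, 3 * (E / 3 - β i / 2) + E % 3 = α i ∧ 2 * (β i / 2) + 1 = β i := by
    intro i hi
    obtain ⟨⟨s, hs⟩, hn⟩ := hF i hi
    omega
  refine not_X_pow_dvd_sum_sub_one F c (fun i => β i / 2) (J := E / 3) (r := E % 3) (by omega)
    (fun i hi => by have := (hF i hi).2; omega) ?_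
  rwa [Finset.sum_congr rfl fun i hi => by rw [(hexp i hi).1, (hexp i hi).2]]

theorem mallows_sloane_bound_RIIminus_general (n d : ℕ) (A : ℕ → ℂ)
    (hA0 : A 0 = 1) (hAz : ∀ i, 0 < i → i < d → A i = 0) (W : ℂ → ℂ → ℂ)
    (hWform : W = fun x y => ∑ i ∈ Finset.range (n + 1), A i * x ^ (n - i) * y ^ i)
    (hWmem : W ∈ Algebra.adjoin ℂ ({WH8, W12} : Set (ℂ → ℂ → ℂ)))
    (hanti : ∀ x y : ℂ,
      W ((x + y) / (Real.sqrt 2 : ℂ)) ((x - y) / (Real.sqrt 2 : ℂ)) = -W x y) :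
    (d : ℤ) ≤ 4 * ⌊((n : ℚ) - 12) / 24⌋ + 4 := by
  have hhom : ∀ l t : ℂ, W l (l * t) = l ^ n * W 1 t := by
    intro l t
    simp only [hWform, one_pow, mul_one, Finset.mul_sum]
    refine Finset.sum_congr rfl fun i hi => ?_
    rw [mul_pow, ← pow_sub_mul_pow l (Nat.lt_succ_iff.mp (Finset.mem_range.mp hi))]
    ring
  obtain ⟨N, c, e, hW1⟩ := exists_eval_one_eq_sum_odd hWmem hanti hhom
  have hcoeff : ∀ j, (∑ i ∈ Finset.range (n + 1), Polynomial.C (A i) * Polynomial.X ^ i).coeff j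
      = if j ≤ n then A j else 0 := by
    intro j
    simp [Polynomial.finsetSum_coeff]
  refine le_floor_of_eq_expand_sum {i | Odd (e i).2 ∧ 8 * (e i).1 + 12 * (e i).2 = n} c
    (fun i => (e i).1) (fun i => (e i).2) (fun i hi => (Finset.mem_filter.mp hi).2)
    (∑ i ∈ Finset.range (n + 1), Polynomial.C (A i) * Polynomial.X ^ i) ?_ ?_
    (Polynomial.funext fun t => ?_)
  · rw [hcoeff, if_pos n.zero_le, hA0]
  · intro j hj hjd
    rw [hcoeff]
    split_ifs <;> simp [hAz j hj hjd]
  · simp [Polynomial.expand_eval, Polynomial.eval_finsetSum, ← hW1, hWform]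

/-- Theorem 5.5: any formal weight enumerator
`W(x,y) = x^n + ∑_{i=d}^n A_i x^{n-i} y^i` (encoded via coefficients `A 0 = 1`,
`A i = 0` for `0 < i < d`, `A d ≠ 0`) in the ring
`R_II⁻ = ℂ[W_{H₈}, W₁₂]` satisfying `W^{σ₂} = -W` obeys the bound
`d ≤ 4⌊(n-12)/24⌋ + 4`. -/
theorem mallows_sloane_bound_RIIminus (n d : ℕ) (A : ℕ → ℂ)
    (hA0 : A 0 = 1) (hAz : ∀ i, 0 < i → i < d → A i = 0) (hAd : A d ≠ 0)
    (hdn : d ≤ n) (W : ℂ → ℂ → ℂ)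
    (hWform : W = fun x y => ∑ i ∈ Finset.range (n + 1), A i * x ^ (n - i) * y ^ i)
    (hWmem : W ∈ Algebra.adjoin ℂ ({WH8, W12} : Set (ℂ → ℂ → ℂ)))
    (hanti : ∀ x y : ℂ,
      W ((x + y) / (Real.sqrt 2 : ℂ)) ((x - y) / (Real.sqrt 2 : ℂ)) = -W x y) :
    (d : ℤ) ≤ 4 * ⌊((n : ℚ) - 12) / 24⌋ + 4 :=
  mallows_sloane_bound_RIIminus_general n d A hA0 hAz W hWform hWmem hanti
end
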